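/- arXiv:1706.07954 — 8 statements merged into one kernel-verified Lean document; each statement's English description precedes it below -/
import Mathlib

section
/- Let f : ℕ → (0,∞) be an eventually non-increasing function with Σ_{n≥1} f(n) = ∞, and suppose the summable ideal I_f := {S ⊆ ℕ : Σ_{n∈S} f(n) < ∞} is strechable. Then I_f is a thinnable ideal. -/
open Filter Topology MeasureTheory Set

/-- The canonical (increasing) enumeration of a set of natural numbers. -/
noncomputable def enumOf (A : Set ℕ) : ℕ → ℕ := Nat.nth (· ∈ A)

/-- `idxSet A B` is the set `A_B = {a_b : b ∈ B}`, where `{a_n}` is the canonical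
enumeration of `A`. -/
noncomputable def idxSet (A B : Set ℕ) : Set ℕ := enumOf A '' B

/-- `seqLE X Y` means `X ≤ Y`, i.e. `x_n ≤ y_n` for all `n`, for the canonical
enumerations `{x_n}` of `X` and `{y_n}` of `Y`. -/
def seqLE (X Y : Set ℕ) : Prop := ∀ n, enumOf X n ≤ enumOf Y n

/-- `A` has asymptotic density `c`: `|A ∩ [1,n]| / n → c`. -/
def HasDensity (A : Set ℕ) (c : ℝ) : Prop :=
  Tendsto (fun n : ℕ => ((A ∩ Set.Icc 1 n).ncard : ℝ) / n) atTop (𝓝 c)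

/-- An ideal on ℕ: closed under finite unions and subsets, contains all finite sets,
and is not the whole power set. -/
def IsIdeal (I : Set (Set ℕ)) : Prop :=
  (∀ A B : Set ℕ, A ∈ I → B ∈ I → A ∪ B ∈ I) ∧
  (∀ A B : Set ℕ, A ⊆ B → B ∈ I → A ∈ I) ∧
  (∀ A : Set ℕ, A.Finite → A ∈ I) ∧
  Set.univ ∉ I

/-- `I` is weakly thinnable: `A_B ∉ I` whenever `A` admits non-zero asymptotic density
and `B ∉ I`. -/
def WeaklyThinnable (I : Set (Set ℕ)) : Prop :=
  ∀ A B : Set ℕ, (∃ c : ℝ, c ≠ 0 ∧ HasDensity A c) → B ∉ I → idxSet A B ∉ I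

/-- `I` is thinnable: weakly thinnable, `B_A ∉ I` whenever `A` admits non-zero asymptotic
density and `B ∉ I`, and `X ∉ I` whenever `X ≤ Y` and `Y ∉ I`. -/
def Thinnable (I : Set (Set ℕ)) : Prop :=
  WeaklyThinnable I ∧
  (∀ A B : Set ℕ, (∃ c : ℝ, c ≠ 0 ∧ HasDensity A c) → B ∉ I → idxSet B A ∉ I) ∧
  (∀ X Y : Set ℕ, X.Infinite → Y.Infinite → seqLE X Y → Y ∉ I → X ∉ I)

/-- `I` is strechable: `kA ∉ I` for all (positive) `k` and all `A ∉ I`. -/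
def Strechable (I : Set (Set ℕ)) : Prop :=
  ∀ k : ℕ, 0 < k → ∀ A : Set ℕ, A ∉ I → (fun a => k * a) '' A ∉ I

/-- The summable ideal `I_f = {S : ∑_{n ∈ S} f n < ∞}`. -/
def summableIdeal (f : ℕ → ℝ) : Set (Set ℕ) := {S | Summable (S.indicator f)}


private lemma ev_summable {g h : ℕ → ℝ} (hg : ∀ n, 0 ≤ g n)
    (hle : ∀ᶠ n in atTop, g n ≤ h n) (hh : Summable h) : Summable g := by
  obtain ⟨N, hNle⟩ := eventually_atTop.1 hle
  rw [← summable_nat_add_iff N]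
  exact Summable.of_nonneg_of_le (fun n => hg _) (fun n => hNle _ (Nat.le_add_left N n))
    ((summable_nat_add_iff N).2 hh)

private lemma summable_comp_div {h : ℕ → ℝ} (hn : ∀ n, 0 ≤ h n) {K : ℕ} (hK : 0 < K)
    (hs : Summable h) : Summable (fun m => h (m / K)) := by
  apply summable_of_sum_range_le (c := (K : ℝ) * ∑' n, h n) (fun n => hn _)
  intro n
  have key : ∑ m ∈ Finset.range n, h (m / K)
      = ∑ j ∈ Finset.range n, ∑ m ∈ Finset.range n with m / K = j, h j := by
    rw [Finset.sum_fiberwise_of_maps_to' (fun m hm => Finset.mem_range.2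
      (lt_of_le_of_lt (Nat.div_le_self m K) (Finset.mem_range.1 hm)))]
  rw [key]
  calc ∑ j ∈ Finset.range n, ∑ m ∈ Finset.range n with m / K = j, h j
      ≤ ∑ j ∈ Finset.range n, (K : ℝ) * h j := by
        refine Finset.sum_le_sum fun j _ => ?_
        rw [Finset.sum_const, nsmul_eq_mul]
        refine mul_le_mul_of_nonneg_right ?_ (hn j)
        have hsub : {m ∈ Finset.range n | m / K = j} ⊆ Finset.Ico (K * j) (K * j + K) := by
          intro m hm
          simp only [Finset.mem_filter] at hm
          have h1 := Nat.div_add_mod m K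
          have h2 := Nat.mod_lt m hK
          rw [hm.2] at h1
          rw [Finset.mem_Ico]
          omega
        have hc := Finset.card_le_card hsub
        rw [Nat.card_Ico] at hc
        have hcard : {m ∈ Finset.range n | m / K = j}.card ≤ K := by omega
        exact_mod_cast hcard
    _ ≤ (K : ℝ) * ∑' j, h j := by
        rw [← Finset.mul_sum]
        exact mul_le_mul_of_nonneg_left
          (Summable.sum_le_tsum (Finset.range n) (fun i _ => hn i) hs) (by positivity)

private lemma indicator_summable_iff {f : ℕ → ℝ} {S : Set ℕ} {e : ℕ → ℕ}
    (he : Function.Injective e) (hr : Set.range e = S) :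
    Summable (S.indicator f) ↔ Summable (fun n => f (e n)) := by
  have h0 : ∀ x ∉ Set.range e, S.indicator f x = 0 := fun x hx =>
    Set.indicator_of_notMem (hr ▸ hx) f
  refine Iff.trans (he.summable_iff h0).symm (summable_congr fun n => ?_)
  exact Set.indicator_of_mem (hr ▸ Set.mem_range_self n) f

private lemma enum_inj {S : Set ℕ} (hS : S.Infinite) : Function.Injective (enumOf S) :=
  Nat.nth_injective hS

private lemma enum_range {S : Set ℕ} (hS : S.Infinite) : Set.range (enumOf S) = S :=
  Nat.range_nth_of_infinite hS

private lemma enum_ge {S : Set ℕ} (hS : S.Infinite) (n : ℕ) : n ≤ enumOf S n :=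
  (Nat.nth_strictMono hS).le_apply

private lemma enum_mono {S : Set ℕ} (hS : S.Infinite) : Monotone (enumOf S) :=
  (Nat.nth_strictMono hS).monotone

private lemma enum_tendsto {S : Set ℕ} (hS : S.Infinite) :
    Tendsto (enumOf S) atTop atTop :=
  tendsto_atTop_mono (enum_ge hS) tendsto_id

private lemma density_pos {A : Set ℕ} {c : ℝ} (hc : c ≠ 0) (hd : HasDensity A c) : 0 < c := by
  rcases hc.lt_or_gt with h | h
  · exfalso
    have h0 : (0:ℝ) ≤ c :=
      le_of_tendsto_of_tendsto' tendsto_const_nhds hd (fun n => by positivity)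
    linarith
  · exact h

private lemma density_infinite {A : Set ℕ} {c : ℝ} (hc : 0 < c) (hd : HasDensity A c) :
    A.Infinite := by
  by_contra hinf
  have hA : A.Finite := Set.not_infinite.1 hinf
  have h0 : Tendsto (fun n : ℕ => ((A ∩ Set.Icc 1 n).ncard : ℝ) / n) atTop (𝓝 0) := by
    apply squeeze_zero (fun n => by positivity) (g := fun n : ℕ => (A.ncard : ℝ) / n)
      (fun n => ?_) (tendsto_const_div_atTop_nhds_zero_nat _)
    rcases Nat.eq_zero_or_pos n with rfl | hn
    · simp
    · have hle : ((A ∩ Set.Icc 1 n).ncard : ℝ) ≤ (A.ncard : ℝ) := by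
        exact_mod_cast Set.ncard_le_ncard Set.inter_subset_left hA
      have hpos : (0:ℝ) < (n:ℝ) := by exact_mod_cast hn
      exact (div_le_div_iff_of_pos_right hpos).2 hle
  exact hc.ne' (tendsto_nhds_unique hd h0)

private lemma ncard_inter_le {A : Set ℕ} (hA : A.Infinite) (n : ℕ) :
    (A ∩ Set.Icc 1 (enumOf A n)).ncard ≤ n + 1 := by
  have hsub : A ∩ Set.Icc 1 (enumOf A n) ⊆ ↑((Finset.range (n + 1)).image (enumOf A)) := by
    rintro x ⟨hxA, _, hx2⟩
    obtain ⟨k, rfl⟩ : ∃ k, enumOf A k = x := by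
      have : x ∈ Set.range (enumOf A) := (enum_range hA).symm ▸ hxA
      exact this
    have hk : k ≤ n := (Nat.nth_le_nth hA).1 hx2
    simp only [Finset.coe_image, Set.mem_image, Finset.mem_coe, Finset.mem_range]
    exact ⟨k, by simpa using Nat.lt_succ_of_le hk, rfl⟩
  calc (A ∩ Set.Icc 1 (enumOf A n)).ncard
      ≤ ((Finset.range (n + 1)).image (enumOf A) : Finset ℕ).card := by
        rw [← Set.ncard_coe_finset]
        exact Set.ncard_le_ncard hsub (Finset.finite_toSet _)
    _ ≤ n + 1 := le_trans (Finset.card_image_le) (by simp)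

private lemma density_growth {A : Set ℕ} {c : ℝ} (hc : 0 < c) (hd : HasDensity A c)
    (hA : A.Infinite) : ∃ K : ℕ, 0 < K ∧ ∀ᶠ n in atTop, enumOf A n ≤ K * n := by
  obtain ⟨M, hM⟩ := eventually_atTop.1 (hd.eventually (eventually_gt_nhds (half_lt_self hc)))
  refine ⟨max 1 ⌈4 / c⌉₊, lt_of_lt_of_le one_pos (le_max_left _ _), ?_⟩
  rw [eventually_atTop]
  refine ⟨max (M + 1) 1, fun n hn => ?_⟩
  have hn1 : 1 ≤ n := le_trans (le_max_right _ _) hn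
  have hnM : M ≤ enumOf A n := by
    have h1 : M + 1 ≤ n := le_trans (le_max_left _ _) hn
    have h2 := enum_ge hA n
    omega
  have hkey := hM (enumOf A n) hnM
  -- hkey : c/2 < ncard / (enumOf A n)
  have hα : (0:ℝ) < (enumOf A n : ℝ) := by
    have := enum_ge hA n; exact_mod_cast lt_of_lt_of_le hn1 (by omega)
  have h2 : c / 2 * (enumOf A n : ℝ) ≤ ((A ∩ Set.Icc 1 (enumOf A n)).ncard : ℝ) := by
    rw [lt_div_iff₀ hα] at hkey
    linarith [hkey]
  have h3 : ((A ∩ Set.Icc 1 (enumOf A n)).ncard : ℝ) ≤ (n : ℝ) + 1 := by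
    exact_mod_cast ncard_inter_le hA n
  have h4 : (n : ℝ) + 1 ≤ 2 * n := by
    have : (1:ℝ) ≤ (n:ℝ) := by exact_mod_cast hn1
    linarith
  have h5 : (enumOf A n : ℝ) ≤ 4 / c * n := by
    rw [div_mul_eq_mul_div, le_div_iff₀ hc]
    nlinarith
  have h6 : (4:ℝ) / c ≤ (max 1 ⌈4 / c⌉₊ : ℕ) := by
    push_cast
    exact le_trans (Nat.le_ceil _) (by exact_mod_cast Nat.le_max_right 1 _)
  have : (enumOf A n : ℝ) ≤ ((max 1 ⌈4 / c⌉₊ : ℕ) : ℝ) * n := by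
    refine le_trans h5 (mul_le_mul_of_nonneg_right h6 (by positivity))
  exact_mod_cast this


/-- If `f : ℕ → (0,∞)` is eventually non-increasing with `∑ f n = ∞` and the summable
ideal `I_f` is strechable, then `I_f` is a thinnable ideal. -/
theorem stmt0 (f : ℕ → ℝ) (hpos : ∀ n, 0 < f n)
    (hmono : ∃ N : ℕ, ∀ m n : ℕ, N ≤ m → m ≤ n → f n ≤ f m)
    (hdiv : ¬ Summable f)
    (hstr : Strechable (summableIdeal f)) :
    IsIdeal (summableIdeal f) ∧ Thinnable (summableIdeal f) := by
  obtain ⟨N, hN⟩ := hmono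
  have hfnn : ∀ n, 0 ≤ f n := fun n => (hpos n).le
  have hfin : ∀ A : Set ℕ, A.Finite → A ∈ summableIdeal f := by
    intro A hA
    refine summable_of_ne_finset_zero (s := hA.toFinset) (fun x hx => ?_)
    exact Set.indicator_of_notMem (by simpa using hx) f
  have hmem : ∀ (S : Set ℕ) (e : ℕ → ℕ), Function.Injective e → Set.range e = S →
      (S ∈ summableIdeal f ↔ Summable (fun n => f (e n))) :=
    fun S e he hr => indicator_summable_iff he hr
  have htrans : ∀ u v : ℕ → ℕ, (∀ᶠ n in atTop, u n ≤ v n) → Tendsto u atTop atTop →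
      Summable (fun n => f (u n)) → Summable (fun n => f (v n)) := by
    intro u v huv hu hs
    refine ev_summable (fun n => hfnn _) ?_ hs
    filter_upwards [huv, hu.eventually_ge_atTop N] with n h1 h2
    exact hN _ _ h2 h1
  have hinf : ∀ B : Set ℕ, B ∉ summableIdeal f → B.Infinite := by
    intro B hB
    by_contra h
    exact hB (hfin B (Set.not_infinite.1 h))
  constructor
  · refine ⟨?_, ?_, hfin, ?_⟩
    · intro A B hA hB
      have hb : Summable (fun n => A.indicator f n + B.indicator f n) := Summable.add hA hB
      refine Summable.of_nonneg_of_le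
        (fun n => Set.indicator_nonneg (fun i _ => hfnn i) n) (fun n => ?_) hb
      by_cases hAn : n ∈ A
      · rw [Set.indicator_of_mem (Set.mem_union_left _ hAn) f, Set.indicator_of_mem hAn f]
        have := Set.indicator_nonneg (fun i (_ : i ∈ B) => hfnn i) n
        linarith
      by_cases hBn : n ∈ B
      · rw [Set.indicator_of_mem (Set.mem_union_right _ hBn) f, Set.indicator_of_mem hBn f]
        have := Set.indicator_nonneg (fun i (_ : i ∈ A) => hfnn i) n
        linarith
      · rw [Set.indicator_of_notMem (fun h => h.elim hAn hBn) f]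
        have h1 := Set.indicator_nonneg (fun i (_ : i ∈ A) => hfnn i) n
        have h2 := Set.indicator_nonneg (fun i (_ : i ∈ B) => hfnn i) n
        linarith
    · intro A B hAB hB
      refine Summable.of_nonneg_of_le
        (fun n => Set.indicator_nonneg (fun i _ => hfnn i) n) (fun n => ?_) hB
      exact Set.indicator_le_indicator_of_subset hAB hfnn n
    · intro h
      have h' : Summable (Set.indicator Set.univ f) := h
      rw [Set.indicator_univ] at h'
      exact hdiv h'
  refine ⟨?_, ?_, ?_⟩
  · -- weakly thinnable
    rintro A B ⟨c, hc0, hd⟩ hB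
    have hc := density_pos hc0 hd
    have hA : A.Infinite := density_infinite hc hd
    have hBinf : B.Infinite := hinf B hB
    obtain ⟨K, hK, hgrow⟩ := density_growth hc hd hA
    have hstrB := hstr K hK B hB
    have hKinj : Function.Injective (fun n => K * enumOf B n) := fun m n h =>
      enum_inj hBinf (Nat.eq_of_mul_eq_mul_left hK h)
    have hKrange : Set.range (fun n => K * enumOf B n) = (fun a => K * a) '' B := by
      rw [show (fun n => K * enumOf B n) = (fun a => K * a) ∘ enumOf B from rfl,
        Set.range_comp, enum_range hBinf]
    have hKnot : ¬ Summable (fun n => f (K * enumOf B n)) := by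
      rwa [hmem _ _ hKinj hKrange] at hstrB
    have heinj : Function.Injective (fun n => enumOf A (enumOf B n)) :=
      (enum_inj hA).comp (enum_inj hBinf)
    have herange : Set.range (fun n => enumOf A (enumOf B n)) = idxSet A B := by
      rw [show (fun n => enumOf A (enumOf B n)) = enumOf A ∘ enumOf B from rfl,
        Set.range_comp, enum_range hBinf]
      rfl
    rw [hmem _ _ heinj herange]
    intro hsum
    apply hKnot
    refine htrans _ _ ?_ ?_ hsum
    · filter_upwards [(enum_tendsto hBinf).eventually hgrow] with n h
      exact h
    · exact tendsto_atTop_mono (fun n => le_trans (enum_ge hBinf n) (enum_ge hA _)) tendsto_id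
  · -- second thinnability condition
    rintro A B ⟨c, hc0, hd⟩ hB
    have hc := density_pos hc0 hd
    have hA : A.Infinite := density_infinite hc hd
    have hBinf : B.Infinite := hinf B hB
    obtain ⟨K, hK, hgrow⟩ := density_growth hc hd hA
    have hBnot : ¬ Summable (fun n => f (enumOf B n)) := by
      rwa [hmem B (enumOf B) (enum_inj hBinf) (enum_range hBinf)] at hB
    have heinj : Function.Injective (fun n => enumOf B (enumOf A n)) :=
      (enum_inj hBinf).comp (enum_inj hA)
    have herange : Set.range (fun n => enumOf B (enumOf A n)) = idxSet B A := by
      rw [show (fun n => enumOf B (enumOf A n)) = enumOf B ∘ enumOf A from rfl,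
        Set.range_comp, enum_range hA]
      rfl
    rw [hmem _ _ heinj herange]
    intro hsum
    apply hBnot
    have h1 : Summable (fun n => f (enumOf B (K * n))) := by
      refine htrans _ _ ?_ ?_ hsum
      · filter_upwards [hgrow] with n h
        exact enum_mono hBinf h
      · exact tendsto_atTop_mono (fun n => le_trans (enum_ge hA n) (enum_ge hBinf _)) tendsto_id
    have h2 : Summable (fun m => f (enumOf B (K * (m / K)))) :=
      summable_comp_div (h := fun n => f (enumOf B (K * n))) (fun n => hfnn _) hK h1
    refine htrans _ _ ?_ ?_ h2
    · refine Eventually.of_forall fun m => ?_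
      refine enum_mono hBinf ?_
      have h3 := Nat.div_add_mod m K
      omega
    · refine tendsto_atTop.2 fun b => ?_
      filter_upwards [eventually_ge_atTop (b + K)] with m hm
      have h3 := Nat.div_add_mod m K
      have h4 := Nat.mod_lt m hK
      have h5 := enum_ge hBinf (K * (m / K))
      omega
  · -- seqLE condition
    intro X Y hX hY hle hYn
    have hYnot : ¬ Summable (fun n => f (enumOf Y n)) := by
      rwa [hmem Y (enumOf Y) (enum_inj hY) (enum_range hY)] at hYn
    rw [hmem X (enumOf X) (enum_inj hX) (enum_range hX)]
    intro hsum
    exact hYnot (htrans _ _ (Eventually.of_forall hle) (enum_tendsto hX) hsum)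
end

section
/- Let f : ℕ → (0,∞) be an eventually non-increasing function with Σ_{n≥1} f(n) = ∞ such that liminf_{n→∞} (Σ_{i∈[1,n]} f(i))/(Σ_{i∈[1,kn]} f(i)) ≠ 0 for all k ∈ ℕ, and suppose the Erdős–Ulam ideal E_f := {S ⊆ ℕ : (Σ_{i∈S∩[1,n]} f(i))/(Σ_{i∈[1,n]} f(i)) → 0 as n → ∞} is strechable. Then E_f is a thinnable ideal. -/
open Filter Topology MeasureTheory Set

/-- `∑_{i ∈ S ∩ [1,n]} f i`. -/
noncomputable def wSum (f : ℕ → ℝ) (S : Set ℕ) (n : ℕ) : ℝ :=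
  ∑ i ∈ Finset.Icc 1 n, S.indicator f i

/-- The Erdős–Ulam ideal `E_f`. -/
def erdosUlamIdeal (f : ℕ → ℝ) : Set (Set ℕ) :=
  {S | Tendsto (fun n : ℕ => wSum f S n / wSum f Set.univ n) atTop (𝓝 0)}

/-! The proof rests on one comparison principle: if `x_j ≤ y_j` for all large `j` and `f` is
eventually non-increasing, then `f y_j ≤ f x_j` for large `j`, so the weighted sums of `Y`
exceed those of `X` by at most a constant, and `Y ∉ E_f` forces `X ∉ E_f`.
A set `A` of positive density satisfies `a_j ≤ k j` for large `j`. Hence `a_{b_j} ≤ k b_j`,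
where `kB ∉ E_f` by strechability, and `b_{a_j} ≤ b_{kj+r}` for every `r`; the `k` residue
classes `{b_{kj+r} : j ∈ ℕ}` cover `B`, so one of them is not in `E_f`. -/

section WeightedSum

variable {f : ℕ → ℝ}

lemma wSum_nonneg (hf : 0 ≤ f) (S : Set ℕ) (n : ℕ) : 0 ≤ wSum f S n :=
  Finset.sum_nonneg fun i _ => indicator_nonneg (fun j _ => hf j) i

lemma wSum_mono (hf : 0 ≤ f) {S T : Set ℕ} (h : S ⊆ T) (n : ℕ) : wSum f S n ≤ wSum f T n :=
  Finset.sum_le_sum fun i _ => indicator_le_indicator_of_subset h (fun j => hf j) i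

lemma wSum_union_le (hf : 0 ≤ f) (S T : Set ℕ) (n : ℕ) :
    wSum f (S ∪ T) n ≤ wSum f S n + wSum f T n := by
  rw [wSum, wSum, wSum, ← Finset.sum_add_distrib]
  refine Finset.sum_le_sum fun i _ => ?_
  by_cases hS : i ∈ S <;> by_cases hT : i ∈ T <;> simp [hS, hT, show 0 ≤ f i from hf i]

lemma wSum_le_sum_of_finite (hf : 0 ≤ f) {S : Set ℕ} (hS : S.Finite) (n : ℕ) :
    wSum f S n ≤ ∑ i ∈ hS.toFinset, f i := by
  classical
  rw [wSum, Finset.sum_indicator_eq_sum_filter]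
  refine Finset.sum_le_sum_of_subset_of_nonneg (fun i hi => ?_) fun i _ _ => hf i
  simpa using (Finset.mem_filter.1 hi).2

lemma wSum_univ_add (n : ℕ) : wSum f univ n + f 0 = ∑ i ∈ Finset.range (n + 1), f i := by
  rw [Finset.range_eq_Ico, Finset.sum_eq_sum_Ico_succ_bot n.succ_pos, Nat.succ_eq_add_one,
    Finset.Ico_add_one_right_eq_Icc, add_comm]
  simp [wSum]

lemma tendsto_wSum_univ_atTop (hf : 0 ≤ f) (hdiv : ¬ Summable f) :
    Tendsto (wSum f univ) atTop atTop := by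
  have h := (not_summable_iff_tendsto_nat_atTop_of_nonneg hf).1 hdiv
  refine (tendsto_atTop_add_const_right _ (-f 0) (h.comp (tendsto_add_atTop_nat 1))).congr
    fun n => ?_
  simp [← wSum_univ_add]

end WeightedSum

section ErdosUlamIdeal

variable {f : ℕ → ℝ}

lemma mem_erdosUlamIdeal_of_wSum_le (hf : 0 ≤ f) {S : Set ℕ} {g : ℕ → ℝ}
    (h : ∀ n, wSum f S n ≤ g n) (hg : Tendsto (fun n => g n / wSum f univ n) atTop (𝓝 0)) :
    S ∈ erdosUlamIdeal f :=
  squeeze_zero (fun n => div_nonneg (wSum_nonneg hf S n) (wSum_nonneg hf univ n))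
    (fun n => div_le_div_of_nonneg_right (h n) (wSum_nonneg hf univ n)) hg

lemma mem_erdosUlamIdeal_of_wSum_le_add (hf : 0 ≤ f) (hdiv : ¬ Summable f) {S T : Set ℕ}
    {C : ℝ} (h : ∀ n, wSum f S n ≤ wSum f T n + C) (hT : T ∈ erdosUlamIdeal f) :
    S ∈ erdosUlamIdeal f := by
  refine mem_erdosUlamIdeal_of_wSum_le hf h ?_
  simpa only [add_div, add_zero] using
    hT.add (tendsto_const_nhds.div_atTop (tendsto_wSum_univ_atTop hf hdiv))

lemma isIdeal_erdosUlamIdeal (hf : 0 ≤ f) (hdiv : ¬ Summable f) :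
    IsIdeal (erdosUlamIdeal f) := by
  have hF := tendsto_wSum_univ_atTop hf hdiv
  refine ⟨fun A B hA hB => ?_, fun A B hAB hB => ?_, fun A hA => ?_, fun huniv => ?_⟩
  · refine mem_erdosUlamIdeal_of_wSum_le hf (wSum_union_le hf A B) ?_
    simpa only [add_div, add_zero] using hA.add hB
  · exact mem_erdosUlamIdeal_of_wSum_le hf (wSum_mono hf hAB) hB
  · exact mem_erdosUlamIdeal_of_wSum_le hf (wSum_le_sum_of_finite hf hA)
      (tendsto_const_nhds.div_atTop hF)
  · have h1 : Tendsto (fun _ : ℕ => (1 : ℝ)) atTop (𝓝 0) :=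
      huniv.congr' ((hF.eventually_ne_atTop 0).mono fun n hn => div_self hn)
    exact one_ne_zero (tendsto_nhds_unique tendsto_const_nhds h1)

end ErdosUlamIdeal

lemma IsIdeal.biUnion_mem {I : Set (Set ℕ)} (hI : IsIdeal I) {ι : Type*} (s : Finset ι)
    {S : ι → Set ℕ} (h : ∀ i ∈ s, S i ∈ I) : (⋃ i ∈ s, S i) ∈ I := by
  classical
  induction s using Finset.induction_on with
  | empty => simpa using hI.2.2.1 ∅ finite_empty
  | insert i s _ ih =>
    rw [Finset.set_biUnion_insert]
    exact hI.1 _ _ (h i (Finset.mem_insert_self i s))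
      (ih fun j hj => h j (Finset.mem_insert_of_mem hj))

lemma IsIdeal.infinite_of_notMem {I : Set (Set ℕ)} (hI : IsIdeal I) {S : Set ℕ} (hS : S ∉ I) :
    S.Infinite :=
  fun h => hS (hI.2.2.1 S h)

section Enumeration

variable {A B : Set ℕ}

lemma enumOf_strictMono (hA : A.Infinite) : StrictMono (enumOf A) := Nat.nth_strictMono hA

lemma enumOf_mem (hA : A.Infinite) (n : ℕ) : enumOf A n ∈ A := Nat.nth_mem_of_infinite hA n

lemma le_enumOf (hA : A.Infinite) (n : ℕ) : n ≤ enumOf A n := (enumOf_strictMono hA).le_apply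

lemma range_enumOf (hA : A.Infinite) : range (enumOf A) = A := Nat.range_nth_of_infinite hA

lemma enumOf_range {g : ℕ → ℕ} (hg : StrictMono g) : enumOf (range g) = g :=
  (StrictMono.range_inj (enumOf_strictMono (infinite_range_of_injective hg.injective)) hg).1
    (range_enumOf (infinite_range_of_injective hg.injective))

lemma enumOf_image {g : ℕ → ℕ} (hg : StrictMono g) (hB : B.Infinite) :
    enumOf (g '' B) = g ∘ enumOf B := by
  rw [← enumOf_range (hg.comp (enumOf_strictMono hB)), range_comp, range_enumOf hB]

lemma enumOf_idxSet (hA : A.Infinite) (hB : B.Infinite) :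
    enumOf (idxSet A B) = enumOf A ∘ enumOf B :=
  enumOf_image (enumOf_strictMono hA) hB

lemma idxSet_infinite (hA : A.Infinite) (hB : B.Infinite) : (idxSet A B).Infinite :=
  hB.image (enumOf_strictMono hA).injective.injOn

end Enumeration

lemma Finset.sum_le_sum_of_injOn {ι : Type*} [DecidableEq ι] {s t : Finset ι} {g : ι → ℝ}
    (φ : ι → ι) (hinj : InjOn φ s) (hmaps : ∀ i ∈ s, φ i ∈ t) (hle : ∀ i ∈ s, g i ≤ g (φ i))
    (hg : ∀ i ∈ t, 0 ≤ g i) : ∑ i ∈ s, g i ≤ ∑ i ∈ t, g i :=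
  calc ∑ i ∈ s, g i ≤ ∑ i ∈ s, g (φ i) := Finset.sum_le_sum hle
    _ = ∑ i ∈ s.image φ, g i := (Finset.sum_image hinj).symm
    _ ≤ ∑ i ∈ t, g i := Finset.sum_le_sum_of_subset_of_nonneg
        (fun i hi => by obtain ⟨j, hj, rfl⟩ := Finset.mem_image.1 hi; exact hmaps j hj)
        fun i hi _ => hg i hi

section Comparison

variable {f : ℕ → ℝ}

lemma wSum_le_wSum_add_of_enumOf_le (hf : 0 ≤ f)
    (hanti : ∃ N : ℕ, ∀ m n : ℕ, N ≤ m → m ≤ n → f n ≤ f m)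
    {X Y : Set ℕ} (hX : X.Infinite) (hY : Y.Infinite)
    (hle : ∀ᶠ j in atTop, enumOf X j ≤ enumOf Y j) :
    ∃ C, ∀ n, wSum f Y n ≤ wSum f X n + C := by
  classical
  obtain ⟨N, hN⟩ := hanti
  obtain ⟨J, hJ⟩ := eventually_atTop.1 hle
  set M := max (max J N) 1
  -- `φ` sends the `j`-th element of `Y` to the `j`-th element of `X`.
  set φ : ℕ → ℕ := fun y => enumOf X (Nat.count (· ∈ Y) y)
  have hφ : ∀ y ∈ Y, enumOf Y M ≤ y → φ y ∈ X ∧ 1 ≤ φ y ∧ φ y ≤ y ∧ f y ≤ f (φ y) := by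
    intro y hy hMy
    set j := Nat.count (· ∈ Y) y
    have hj : M ≤ j := by
      simpa only [enumOf, Nat.count_nth_of_infinite (p := (· ∈ Y)) hY M] using
        Nat.count_monotone (· ∈ Y) hMy
    have hyj : enumOf Y j = y := Nat.nth_count (p := (· ∈ Y)) hy
    have hφy : φ y ≤ y := (hJ j (by omega)).trans_eq hyj
    have hjφ : j ≤ φ y := le_enumOf hX j
    exact ⟨enumOf_mem hX j, by omega, hφy, hN _ _ (by omega) hφy⟩
  refine ⟨∑ i ∈ Finset.range (enumOf Y M), f i, fun n => ?_⟩
  rw [wSum, wSum, Finset.sum_indicator_eq_sum_filter, Finset.sum_indicator_eq_sum_filter,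
    ← Finset.sum_filter_add_sum_filter_not _ (· < enumOf Y M), add_comm]
  have hmem : ∀ y ∈ ({y ∈ Finset.Icc 1 n | y ∈ Y} : Finset ℕ).filter (¬ · < enumOf Y M),
      y ∈ Y ∧ y ≤ n ∧ enumOf Y M ≤ y := by
    intro y hy
    simp only [Finset.mem_filter, Finset.mem_Icc, not_lt] at hy
    exact ⟨hy.1.2, hy.1.1.2, hy.2⟩
  gcongr ?_ + ?_
  · refine Finset.sum_le_sum_of_injOn φ (fun y hy y' hy' h => ?_) (fun y hy => ?_)
      (fun y hy => (hφ y (hmem y hy).1 (hmem y hy).2.2).2.2.2) fun i _ => hf i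
    · exact Nat.count_injective (hmem y hy).1 (hmem y' hy').1
        ((enumOf_strictMono hX).injective h)
    · obtain ⟨hyY, hyn, hMy⟩ := hmem y hy
      obtain ⟨hφX, hφ1, hφy, -⟩ := hφ y hyY hMy
      exact Finset.mem_filter.2 ⟨Finset.mem_Icc.2 ⟨hφ1, hφy.trans hyn⟩, hφX⟩
  · exact Finset.sum_le_sum_of_subset_of_nonneg
      (fun y hy => Finset.mem_range.2 (Finset.mem_filter.1 hy).2) fun i _ _ => hf i

lemma notMem_erdosUlamIdeal_of_enumOf_le (hf : 0 ≤ f) (hdiv : ¬ Summable f)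
    (hanti : ∃ N : ℕ, ∀ m n : ℕ, N ≤ m → m ≤ n → f n ≤ f m)
    {X Y : Set ℕ} (hX : X.Infinite) (hY : Y.Infinite)
    (hle : ∀ᶠ j in atTop, enumOf X j ≤ enumOf Y j) (hYI : Y ∉ erdosUlamIdeal f) :
    X ∉ erdosUlamIdeal f := fun hXI =>
  let ⟨_, hC⟩ := wSum_le_wSum_add_of_enumOf_le hf hanti hX hY hle
  hYI (mem_erdosUlamIdeal_of_wSum_le_add hf hdiv hC hXI)

end Comparison

section Density

variable {A : Set ℕ} {c : ℝ}

lemma HasDensity.nonneg (hd : HasDensity A c) : 0 ≤ c :=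
  ge_of_tendsto' hd fun _ => div_nonneg (Nat.cast_nonneg _) (Nat.cast_nonneg _)

lemma HasDensity.infinite (hd : HasDensity A c) (hc : c ≠ 0) : A.Infinite := by
  intro hA
  refine hc (tendsto_nhds_unique hd (squeeze_zero (fun _ => by positivity) (fun n => ?_)
    (tendsto_const_div_atTop_nhds_zero_nat (A.ncard : ℝ))))
  gcongr
  exact inter_subset_left

lemma ncard_inter_Icc_enumOf_le (hA : A.Infinite) (j : ℕ) :
    (A ∩ Icc 1 (enumOf A j)).ncard ≤ j + 1 := by
  have hsub : A ∩ Icc 1 (enumOf A j) ⊆ ((Finset.range (j + 1)).image (enumOf A) : Set ℕ) := by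
    rintro x ⟨hxA, -, hxj⟩
    obtain ⟨i, rfl⟩ := (range_enumOf hA).symm ▸ hxA
    exact Finset.mem_coe.2 (Finset.mem_image_of_mem _
      (Finset.mem_range.2 (Nat.lt_succ_of_le ((enumOf_strictMono hA).le_iff_le.1 hxj))))
  calc (A ∩ Icc 1 (enumOf A j)).ncard ≤ ((Finset.range (j + 1)).image (enumOf A)).card := by
        exact (ncard_le_ncard hsub (Finset.finite_toSet _)).trans_eq (ncard_coe_finset _)
    _ ≤ j + 1 := Finset.card_image_le.trans (Finset.card_range _).le

lemma HasDensity.exists_enumOf_le_mul (hd : HasDensity A c) (hc : c ≠ 0) :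
    ∃ k : ℕ, 0 < k ∧ ∀ᶠ j in atTop, enumOf A j ≤ k * j := by
  have hcpos : 0 < c := hd.nonneg.lt_of_ne' hc
  have hA := hd.infinite hc
  refine ⟨⌈4 / c⌉₊, Nat.ceil_pos.2 (by positivity), ?_⟩
  have hev := (hd.comp (enumOf_strictMono hA).tendsto_atTop).eventually
    (eventually_gt_nhds (half_lt_self hcpos))
  filter_upwards [hev, eventually_ge_atTop 1] with j hj hj1
  have hapos : (0 : ℝ) < enumOf A j := Nat.cast_pos.2 (by have := le_enumOf hA j; omega)
  have hcount : ((A ∩ Icc 1 (enumOf A j)).ncard : ℝ) ≤ j + 1 := by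
    exact_mod_cast ncard_inter_Icc_enumOf_le hA j
  have hj1' : (1 : ℝ) ≤ j := by exact_mod_cast hj1
  have hceil : 4 / c ≤ ⌈4 / c⌉₊ := Nat.le_ceil _
  rw [Function.comp_apply, lt_div_iff₀ hapos] at hj
  have : (enumOf A j : ℝ) ≤ ⌈4 / c⌉₊ * j := by
    rw [div_le_iff₀ hcpos] at hceil
    nlinarith
  exact_mod_cast this

end Density

section Thinnable

variable {f : ℕ → ℝ}

lemma weaklyThinnable_erdosUlamIdeal (hf : 0 ≤ f) (hdiv : ¬ Summable f)
    (hanti : ∃ N : ℕ, ∀ m n : ℕ, N ≤ m → m ≤ n → f n ≤ f m)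
    (hstr : Strechable (erdosUlamIdeal f)) : WeaklyThinnable (erdosUlamIdeal f) := by
  rintro A B ⟨c, hc, hd⟩ hB
  have hA := hd.infinite hc
  have hBinf := (isIdeal_erdosUlamIdeal hf hdiv).infinite_of_notMem hB
  obtain ⟨k, hk, hak⟩ := hd.exists_enumOf_le_mul hc
  have hmul : StrictMono (k * ·) := strictMono_mul_left_of_pos hk
  refine notMem_erdosUlamIdeal_of_enumOf_le hf hdiv hanti (idxSet_infinite hA hBinf)
    (hBinf.image hmul.injective.injOn) ?_ (hstr k hk B hB)
  rw [enumOf_idxSet hA hBinf, enumOf_image hmul hBinf]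
  exact (enumOf_strictMono hBinf).tendsto_atTop.eventually hak

lemma idxSet_notMem_erdosUlamIdeal (hf : 0 ≤ f) (hdiv : ¬ Summable f)
    (hanti : ∃ N : ℕ, ∀ m n : ℕ, N ≤ m → m ≤ n → f n ≤ f m) {A B : Set ℕ}
    (hA : ∃ c : ℝ, c ≠ 0 ∧ HasDensity A c) (hB : B ∉ erdosUlamIdeal f) :
    idxSet B A ∉ erdosUlamIdeal f := by
  obtain ⟨c, hc, hd⟩ := hA
  have hI := isIdeal_erdosUlamIdeal hf hdiv
  have hAinf := hd.infinite hc
  have hBinf := hI.infinite_of_notMem hB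
  obtain ⟨k, hk, hak⟩ := hd.exists_enumOf_le_mul hc
  have hres : ∀ r, StrictMono (fun j => k * j + r) :=
    fun r => (strictMono_mul_left_of_pos hk).add_const r
  have hcover : B ⊆ ⋃ r ∈ Finset.range k, idxSet B (range fun j => k * j + r) := by
    intro b hb
    obtain ⟨i, rfl⟩ : b ∈ range (enumOf B) := (range_enumOf hBinf).symm ▸ hb
    exact mem_biUnion (Finset.mem_range.2 (Nat.mod_lt i hk))
      ⟨i, ⟨i / k, Nat.div_add_mod i k⟩, rfl⟩
  obtain ⟨r, hr⟩ : ∃ r, idxSet B (range fun j => k * j + r) ∉ erdosUlamIdeal f := by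
    by_contra! h
    exact hB (hI.2.1 _ _ hcover (hI.biUnion_mem _ fun r _ => h r))
  have hresInf := infinite_range_of_injective (hres r).injective
  refine notMem_erdosUlamIdeal_of_enumOf_le hf hdiv hanti (idxSet_infinite hBinf hAinf)
    (idxSet_infinite hBinf hresInf) ?_ hr
  rw [enumOf_idxSet hBinf hAinf, enumOf_idxSet hBinf hresInf, enumOf_range (hres r)]
  filter_upwards [hak] with j hj
  exact (enumOf_strictMono hBinf).monotone (hj.trans (Nat.le_add_right _ _))

end Thinnable

theorem stmt1_general (f : ℕ → ℝ) (hpos : ∀ n, 0 < f n)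
    (hmono : ∃ N : ℕ, ∀ m n : ℕ, N ≤ m → m ≤ n → f n ≤ f m)
    (hdiv : ¬ Summable f)
    (hstr : Strechable (erdosUlamIdeal f)) :
    IsIdeal (erdosUlamIdeal f) ∧ Thinnable (erdosUlamIdeal f) := by
  have hf : 0 ≤ f := fun n => (hpos n).le
  refine ⟨isIdeal_erdosUlamIdeal hf hdiv, weaklyThinnable_erdosUlamIdeal hf hdiv hmono hstr,
    fun A B hA hB => idxSet_notMem_erdosUlamIdeal hf hdiv hmono hA hB, ?_⟩
  exact fun X Y hX hY hle hYI =>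
    notMem_erdosUlamIdeal_of_enumOf_le hf hdiv hmono hX hY (Eventually.of_forall hle) hYI

/-- If `f : ℕ → (0,∞)` is eventually non-increasing with `∑ f n = ∞`, satisfies
`liminf_n (∑_{i ≤ n} f i)/(∑_{i ≤ kn} f i) ≠ 0` for all `k`, and the Erdős–Ulam ideal
`E_f` is strechable, then `E_f` is a thinnable ideal. -/
theorem stmt1 (f : ℕ → ℝ) (hpos : ∀ n, 0 < f n)
    (hmono : ∃ N : ℕ, ∀ m n : ℕ, N ≤ m → m ≤ n → f n ≤ f m)
    (hdiv : ¬ Summable f)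
    (hliminf : ∀ k : ℕ, 0 < k →
      liminf (fun n : ℕ => wSum f Set.univ n / wSum f Set.univ (k * n)) atTop ≠ 0)
    (hstr : Strechable (erdosUlamIdeal f)) :
    IsIdeal (erdosUlamIdeal f) ∧ Thinnable (erdosUlamIdeal f) :=
  stmt1_general f hpos hmono hdiv hstr
end

section
/- For every real α ≥ −1, the ideal I_α := {S ⊆ ℕ : d*_α(S) = 0} is thinnable, where d*_α(S) = limsup_{n→∞} (Σ_{i∈S∩[1,n]} i^α)/(Σ_{i∈[1,n]} i^α) is the upper α-density. -/
open Filter Topology MeasureTheory Set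

/-- The upper `α`-density `d⋆_α(S) = limsup_n (∑_{i ∈ S ∩ [1,n]} i^α) / (∑_{i ∈ [1,n]} i^α)`. -/
noncomputable def upperAlphaDensity (α : ℝ) (S : Set ℕ) : ℝ :=
  limsup (fun n : ℕ =>
    (∑ i ∈ Finset.Icc 1 n, S.indicator (fun i : ℕ => (i : ℝ) ^ α) i) /
      (∑ i ∈ Finset.Icc 1 n, (i : ℝ) ^ α)) atTop

/-- The ideal `I_α` of sets with zero upper `α`-density. -/
def alphaIdeal (α : ℝ) : Set (Set ℕ) := {S | upperAlphaDensity α S = 0}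

/-!
For `α ≤ 0` the weights `i ^ α` do not increase, so moving the points of a set down (keeping
their order) can only add mass, up to the single point that may land on `0`. Splitting a set
into `D` interleaved subsequences costs at most a factor `D`, and the mass of
`k S = {k s : s ∈ S}` up to `k n` is `k ^ α` times that of `S` up to `n`, while
`∑_{i ≤ k n} i ^ α ≤ k ∑_{i ≤ n} i ^ α`. Since `∑ i ^ α` diverges for `α ≥ -1`, bounded errors
are negligible, and positive upper `α`-density passes from `range η` to `range ξ` whenever
`ξ i ≤ k η (D (i + 1))`. A set of positive asymptotic density is enumerated by
`a_i ≤ D (i + 1)`, which puts `A_B`, `B_A` and any `X ≤ Y` in this position.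

For `α ≥ 0`, the mass of `S ∩ [1, n]` lies between `(m / 2) ^ (α + 1)` and `n ^ α m`, where
`m = |S ∩ [1, n]|`; as `∑_{i ≤ n} i ^ α` is of order `n ^ (α + 1)`, `I_α` is the ideal `I_0` of
sets of asymptotic density zero, which the case `α = 0` covers.
-/

noncomputable def alphaMass (α : ℝ) (S : Set ℕ) (n : ℕ) : ℝ :=
  ∑ i ∈ Finset.Icc 1 n, S.indicator (fun i : ℕ => (i : ℝ) ^ α) i

section AnyExponent

variable {α : ℝ}

lemma alphaMass_eq_sum_filter (S : Set ℕ) [DecidablePred (· ∈ S)] (n : ℕ) :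
    alphaMass α S n = ∑ i ∈ (Finset.Icc 1 n).filter (· ∈ S), (i : ℝ) ^ α := by
  rw [alphaMass, Finset.sum_filter]
  exact Finset.sum_congr rfl fun i _ => by simp only [Set.indicator_apply]

lemma alphaMass_nonneg (S : Set ℕ) (n : ℕ) : 0 ≤ alphaMass α S n :=
  Finset.sum_nonneg fun i _ => Set.indicator_nonneg (fun j _ => by positivity) i

lemma alphaMass_mono {S T : Set ℕ} (h : S ⊆ T) (n : ℕ) : alphaMass α S n ≤ alphaMass α T n :=
  Finset.sum_le_sum fun i _ =>
    Set.indicator_le_indicator_of_subset h (fun j => by positivity) i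

lemma alphaMass_univ_pos {n : ℕ} (hn : 1 ≤ n) : 0 < alphaMass α univ n := by
  rw [alphaMass, Set.indicator_univ]
  exact Finset.sum_pos (fun i hi => by
    have : (1 : ℝ) ≤ i := by exact_mod_cast (Finset.mem_Icc.mp hi).1
    positivity) ⟨1, Finset.mem_Icc.mpr ⟨le_rfl, hn⟩⟩

lemma tendsto_alphaMass_univ (hα : -1 ≤ α) : Tendsto (alphaMass α univ) atTop atTop := by
  have hdiv : Tendsto (fun n => ∑ i ∈ Finset.range n, (i : ℝ) ^ α) atTop atTop :=
    (not_summable_iff_tendsto_nat_atTop_of_nonneg fun i => by positivity).mp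
      (by rw [Real.summable_nat_rpow]; linarith)
  refine tendsto_atTop_mono (fun n => ?_) (tendsto_atTop_add_const_right _ (-1) hdiv)
  have hsub : Finset.range n ⊆ insert 0 (Finset.Icc 1 n) := fun i hi => by
    simp only [Finset.mem_insert, Finset.mem_Icc, Finset.mem_range] at hi ⊢
    omega
  have h0 : ((0 : ℕ) : ℝ) ^ α ≤ 1 := by simpa using Real.zero_rpow_le_one α
  calc ∑ i ∈ Finset.range n, (i : ℝ) ^ α + -1
      ≤ ∑ i ∈ insert 0 (Finset.Icc 1 n), (i : ℝ) ^ α + -1 := by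
        gcongr ?_ + _
        exact Finset.sum_le_sum_of_subset_of_nonneg hsub fun i _ _ => by positivity
    _ ≤ alphaMass α univ n := by
        rw [Finset.sum_insert (by simp), alphaMass, Set.indicator_univ]
        linarith

lemma notMem_alphaIdeal_iff {S : Set ℕ} :
    S ∉ alphaIdeal α ↔ ∃ δ > 0, ∃ᶠ n in atTop, δ * alphaMass α univ n ≤ alphaMass α S n := by
  set u : ℕ → ℝ := fun n => alphaMass α S n / alphaMass α univ n
  have hu0 : ∀ n, 0 ≤ u n := fun n => div_nonneg (alphaMass_nonneg S n) (alphaMass_nonneg _ n)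
  have hu1 : ∀ n, u n ≤ 1 := fun n =>
    div_le_one_of_le₀ (alphaMass_mono (subset_univ S) n) (alphaMass_nonneg _ n)
  have hbdd : IsBoundedUnder (· ≤ ·) atTop u := isBoundedUnder_of ⟨1, hu1⟩
  have hdens : upperAlphaDensity α S = limsup u atTop := by
    simp only [upperAlphaDensity, u, alphaMass, Set.indicator_univ]
  have hlim0 : 0 ≤ limsup u atTop := le_limsup_of_frequently_le (Frequently.of_forall hu0) hbdd
  simp only [alphaIdeal, mem_ofPred_eq, hdens]
  constructor
  · intro hne
    have hpos : 0 < limsup u atTop := lt_of_le_of_ne hlim0 (Ne.symm hne)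
    refine ⟨_, half_pos hpos, (frequently_lt_of_lt_limsup (isCoboundedUnder_le_of_le atTop hu0)
      (half_lt_self hpos)).mono fun n hn => ?_⟩
    rcases (alphaMass_nonneg (α := α) univ n).eq_or_lt with h | h
    · rw [← h, mul_zero]
      exact alphaMass_nonneg S n
    · exact ((lt_div_iff₀ h).mp hn).le
  · rintro ⟨δ, hδ, hfreq⟩ h0
    have : δ ≤ limsup u atTop := by
      refine le_limsup_of_frequently_le ?_ hbdd
      exact (hfreq.and_eventually (eventually_ge_atTop 1)).mono fun n ⟨h, hn⟩ =>
        (le_div_iff₀ (alphaMass_univ_pos hn)).mpr h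
    linarith

lemma alphaMass_union_le (S T : Set ℕ) (n : ℕ) :
    alphaMass α (S ∪ T) n ≤ alphaMass α S n + alphaMass α T n := by
  rw [alphaMass, alphaMass, alphaMass, ← Finset.sum_add_distrib]
  refine Finset.sum_le_sum fun i _ => ?_
  have := congrFun (Set.indicator_union_add_inter (fun i : ℕ => (i : ℝ) ^ α) S T) i
  simp only [Pi.add_apply] at this
  linarith [Set.indicator_nonneg (fun j _ => by positivity : ∀ j ∈ S ∩ T, 0 ≤ (j : ℝ) ^ α) i]

lemma alphaMass_biUnion_le {ι : Type*} (R : Finset ι) (T : ι → Set ℕ) (n : ℕ) :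
    alphaMass α (⋃ r ∈ R, T r) n ≤ ∑ r ∈ R, alphaMass α (T r) n := by
  classical
  induction R using Finset.induction_on with
  | empty => simp [alphaMass]
  | insert a R ha ih =>
    rw [Finset.set_biUnion_insert, Finset.sum_insert ha]
    exact (alphaMass_union_le _ _ n).trans (by gcongr)

lemma alphaMass_image_mul {k : ℕ} (hk : 0 < k) (S : Set ℕ) (n : ℕ) :
    alphaMass α ((fun a => k * a) '' S) (k * n) = (k : ℝ) ^ α * alphaMass α S n := by
  classical
  have himage : (Finset.Icc 1 (k * n)).filter (· ∈ (fun a => k * a) '' S) =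
      ((Finset.Icc 1 n).filter (· ∈ S)).image (k * ·) := by
    ext j
    simp only [Finset.mem_filter, Finset.mem_Icc, Finset.mem_image, Set.mem_image]
    constructor
    · rintro ⟨⟨h1, h2⟩, s, hs, rfl⟩
      exact ⟨s, ⟨⟨Nat.pos_of_mul_pos_left h1, Nat.le_of_mul_le_mul_left h2 hk⟩, hs⟩, rfl⟩
    · rintro ⟨s, ⟨⟨h1, h2⟩, hs⟩, rfl⟩
      exact ⟨⟨Nat.one_le_iff_ne_zero.mpr (by positivity), Nat.mul_le_mul_left k h2⟩, s, hs, rfl⟩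
  rw [alphaMass_eq_sum_filter, alphaMass_eq_sum_filter, himage,
    Finset.sum_image fun a _ b _ h => Nat.eq_of_mul_eq_mul_left hk h, Finset.mul_sum]
  refine Finset.sum_congr rfl fun i _ => ?_
  rw [Nat.cast_mul, Real.mul_rpow (by positivity) (by positivity)]

lemma alphaMass_range_eq {η : ℕ → ℕ} (hη : StrictMono η) (n : ℕ) :
    alphaMass α (range η) n =
      ∑ t ∈ Finset.range (n + 1), (Set.Icc 1 n).indicator (fun i : ℕ => (i : ℝ) ^ α) (η t) := by
  classical
  set I := (Finset.range (n + 1)).image η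
  have hI : ∀ i ∈ Finset.Icc 1 n, (range η).indicator (fun i : ℕ => (i : ℝ) ^ α) i =
      (I : Set ℕ).indicator (fun i : ℕ => (i : ℝ) ^ α) i := by
    intro i hi
    have hiff : i ∈ range η ↔ i ∈ (I : Set ℕ) := by
      simp only [Finset.coe_image, Finset.coe_range, Set.mem_image, Set.mem_Iio, Set.mem_range, I]
      refine ⟨fun ⟨t, ht⟩ => ⟨t, ?_, ht⟩, fun ⟨t, _, ht⟩ => ⟨t, ht⟩⟩
      have := hη.le_apply (x := t)
      have := (Finset.mem_Icc.mp hi).2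
      omega
    simp only [Set.indicator_apply, hiff]
  rw [alphaMass, Finset.sum_congr rfl hI, Finset.sum_indicator_eq_sum_inter, ← Finset.coe_Icc,
    ← Finset.sum_image (g := η) (fun a _ b _ h => hη.injective h),
    Finset.sum_indicator_eq_sum_inter, Finset.inter_comm]

end AnyExponent

lemma HasDensity.infinite_and_exists_enumOf_le {A : Set ℕ} {c : ℝ} (hA : HasDensity A c)
    (hc : c ≠ 0) :
    A.Infinite ∧ ∃ D > 0, ∀ k, enumOf A k ≤ D * (k + 1) := by
  classical
  have hcpos : 0 < c := lt_of_le_of_ne (ge_of_tendsto' hA fun n => by positivity) hc.symm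
  have hcount : ∀ n, ((A ∩ Set.Icc 1 n).ncard : ℝ) ≤ Nat.count (· ∈ A) (n + 1) := by
    intro n
    rw [Nat.count_eq_card_filter_range, ← Set.ncard_coe_finset]
    refine Nat.cast_le.mpr (Set.ncard_le_ncard (fun i ⟨hiA, _, hin⟩ => ?_) (Finset.finite_toSet _))
    simp only [Finset.coe_filter, Finset.mem_range, Set.mem_ofPred_eq]
    exact ⟨by omega, hiA⟩
  obtain ⟨N, hN⟩ := eventually_atTop.mp (hA.eventually (eventually_gt_nhds (half_lt_self hcpos)))
  obtain ⟨M, hM⟩ := exists_nat_gt (2 / c)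
  have hMc : 2 < M * c := by rwa [div_lt_iff₀ hcpos] at hM
  have hMpos : 0 < M := by
    have : (0 : ℝ) < M := (div_pos two_pos hcpos).trans hM
    exact_mod_cast this
  have hlt : ∀ k, k < Nat.count (· ∈ A) (N + M * (k + 1) + 1) := by
    intro k
    have hn := hN (N + M * (k + 1)) (Nat.le_add_right _ _)
    rw [lt_div_iff₀ (by positivity)] at hn
    have := hcount (N + M * (k + 1))
    push_cast at hn this
    have : (k : ℝ) < Nat.count (· ∈ A) (N + M * (k + 1) + 1) := by nlinarith
    exact_mod_cast this
  have hinf : A.Infinite := fun hfin =>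
    (hlt hfin.toFinset.card).not_ge (Nat.count_le_card (p := (· ∈ A)) hfin _)
  refine ⟨hinf, N + M, by omega, fun k => ?_⟩
  have := Nat.nth_lt_of_lt_count (hlt k)
  calc enumOf A k ≤ N + M * (k + 1) := by rw [enumOf]; omega
    _ ≤ (N + M) * (k + 1) := by nlinarith

section NonposExponent

variable {α : ℝ}

lemma antitoneOn_indicator_Icc_rpow (hα0 : α ≤ 0) (n : ℕ) :
    AntitoneOn ((Set.Icc 1 n).indicator fun i : ℕ => (i : ℝ) ^ α) (Set.Ici 1) := by
  intro a ha b _ hab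
  by_cases hb : b ∈ Set.Icc 1 n
  · have haIcc : a ∈ Set.Icc 1 n := ⟨ha, hab.trans hb.2⟩
    rw [Set.indicator_of_mem hb, Set.indicator_of_mem haIcc]
    exact Real.rpow_le_rpow_of_nonpos (by exact_mod_cast Set.mem_Ici.mp ha)
      (by exact_mod_cast hab) hα0
  · rw [Set.indicator_of_notMem hb]
    exact Set.indicator_nonneg (fun i _ => by positivity) a

lemma alphaMass_coe_finset_le_card (hα0 : α ≤ 0) (F : Finset ℕ) (n : ℕ) :
    alphaMass α F n ≤ F.card := by
  classical
  rw [alphaMass_eq_sum_filter]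
  calc ∑ i ∈ (Finset.Icc 1 n).filter (· ∈ (F : Set ℕ)), (i : ℝ) ^ α
      ≤ ((Finset.Icc 1 n).filter (· ∈ (F : Set ℕ))).card • (1 : ℝ) := by
        refine Finset.sum_le_card_nsmul _ _ _ fun i hi => ?_
        have : (1 : ℝ) ≤ i := by exact_mod_cast (Finset.mem_Icc.mp (Finset.mem_filter.mp hi).1).1
        exact Real.rpow_le_one_of_one_le_of_nonpos this hα0
    _ ≤ F.card := by
        rw [nsmul_one]
        exact_mod_cast Finset.card_le_card fun i hi => (Finset.mem_filter.mp hi).2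

lemma alphaMass_univ_mul_le (hα0 : α ≤ 0) (k n : ℕ) :
    alphaMass α univ (k * n) ≤ k * alphaMass α univ n := by
  have hIoc : ∀ m, alphaMass α univ m = ∑ i ∈ Finset.Ioc 0 m, (i : ℝ) ^ α := fun m => by
    rw [alphaMass, Set.indicator_univ, ← Finset.Icc_add_one_left_eq_Ioc, zero_add]
  rcases Nat.eq_zero_or_pos k with rfl | hk
  · simp [alphaMass]
  induction n with
  | zero => simp [alphaMass]
  | succ n ih =>
    have hblock :
        ∑ i ∈ Finset.Ioc (k * n) (k * n + k), (i : ℝ) ^ α ≤ k * ((n + 1 : ℕ) : ℝ) ^ α := by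
      calc ∑ i ∈ Finset.Ioc (k * n) (k * n + k), (i : ℝ) ^ α
          ≤ (Finset.Ioc (k * n) (k * n + k)).card • ((n + 1 : ℕ) : ℝ) ^ α := by
            refine Finset.sum_le_card_nsmul _ _ _ fun i hi => ?_
            have hi : n + 1 ≤ i := by
              have := (Finset.mem_Ioc.mp hi).1
              have : n ≤ k * n := Nat.le_mul_of_pos_left n hk
              omega
            exact Real.rpow_le_rpow_of_nonpos (by positivity) (by exact_mod_cast hi) hα0
        _ = k * ((n + 1 : ℕ) : ℝ) ^ α := by simp [Nat.card_Ioc]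
    rw [hIoc, hIoc] at ih
    rw [hIoc, hIoc, Nat.mul_succ, ← Finset.sum_Ioc_consecutive _ (Nat.zero_le (k * n))
      (Nat.le_add_right _ k), Finset.sum_Ioc_succ_top (Nat.zero_le n)]
    linarith

lemma notMem_alphaIdeal_of_alphaMass_le (hα : -1 ≤ α) (hα0 : α ≤ 0) {X Y : Set ℕ} {k : ℕ}
    (hk : 0 < k) {C E : ℝ} (hC : 0 < C)
    (hmass : ∀ n, alphaMass α Y n ≤ C * alphaMass α X (k * n) + E) (hY : Y ∉ alphaIdeal α) :
    X ∉ alphaIdeal α := by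
  obtain ⟨δ, hδ, hfreq⟩ := notMem_alphaIdeal_iff.mp hY
  have hlarge : ∀ᶠ n in atTop, 2 * E / δ ≤ alphaMass α univ n :=
    (tendsto_alphaMass_univ hα).eventually_ge_atTop _
  have hkn : Tendsto (fun n : ℕ => k * n) atTop atTop :=
    tendsto_atTop_mono (fun n => Nat.le_mul_of_pos_left n hk) tendsto_id
  refine notMem_alphaIdeal_iff.mpr ⟨δ / (2 * C * k), by positivity, hkn.frequently ?_⟩
  refine (hfreq.and_eventually hlarge).mono fun n ⟨hn, hnE⟩ => ?_
  have hE : E ≤ δ / 2 * alphaMass α univ n := by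
    rw [div_le_iff₀ hδ] at hnE
    linarith
  calc δ / (2 * C * k) * alphaMass α univ (k * n)
      ≤ δ / (2 * C * k) * (k * alphaMass α univ n) := by
        gcongr
        exact alphaMass_univ_mul_le hα0 k n
    _ = δ / 2 * alphaMass α univ n / C := by field_simp
    _ ≤ alphaMass α X (k * n) := by
        rw [div_le_iff₀ hC]
        linarith [hmass n]

lemma infinite_of_notMem_alphaIdeal (hα : -1 ≤ α) (hα0 : α ≤ 0) {S : Set ℕ}
    (hS : S ∉ alphaIdeal α) : S.Infinite := by
  intro hfin
  obtain ⟨δ, hδ, hfreq⟩ := notMem_alphaIdeal_iff.mp hS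
  have hlarge : ∀ᶠ n in atTop, (hfin.toFinset.card + 1) / δ ≤ alphaMass α univ n :=
    (tendsto_alphaMass_univ hα).eventually_ge_atTop _
  obtain ⟨n, hn, hnlarge⟩ := (hfreq.and_eventually hlarge).exists
  have hcard := alphaMass_coe_finset_le_card hα0 hfin.toFinset n
  rw [Set.Finite.coe_toFinset] at hcard
  rw [div_le_iff₀ hδ] at hnlarge
  linarith

/-- The `+ 1` pays for `η 0`: its counterpart `ξ 0` may be `0`, which carries no weight. -/
lemma alphaMass_range_le_of_le (hα0 : α ≤ 0) {ξ η : ℕ → ℕ} (hξ : StrictMono ξ)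
    (hη : StrictMono η) (hle : ∀ t, ξ t ≤ η t) (n : ℕ) :
    alphaMass α (range η) n ≤ alphaMass α (range ξ) n + 1 := by
  rw [alphaMass_range_eq hξ, alphaMass_range_eq hη, Finset.sum_range_succ',
    Finset.sum_range_succ']
  have hη0 : (Set.Icc 1 n).indicator (fun i : ℕ => (i : ℝ) ^ α) (η 0) ≤ 1 := by
    rw [Set.indicator_apply]
    split_ifs with h
    · exact Real.rpow_le_one_of_one_le_of_nonpos (by exact_mod_cast h.1) hα0
    · exact zero_le_one
  have hξ0 := Set.indicator_nonneg (fun i _ => by positivity : ∀ i ∈ Set.Icc 1 n,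
    0 ≤ (i : ℝ) ^ α) (ξ 0)
  have htail : ∑ t ∈ Finset.range n, (Set.Icc 1 n).indicator (fun i : ℕ => (i : ℝ) ^ α) (η (t + 1))
      ≤ ∑ t ∈ Finset.range n, (Set.Icc 1 n).indicator (fun i : ℕ => (i : ℝ) ^ α) (ξ (t + 1)) :=
    Finset.sum_le_sum fun t _ =>
      have hξ1 : 1 ≤ ξ (t + 1) := (Nat.le_add_left 1 t).trans hξ.le_apply
      antitoneOn_indicator_Icc_rpow hα0 n hξ1 (hξ1.trans (hle _)) (hle _)
  linarith

/-- `range η` is covered by its first `D` points and the `D` subsequences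
`q ↦ η (D * (q + 1) + r)`, each dominated termwise by the one with `r = 0`. -/
lemma alphaMass_range_le_mul_subsequence (hα0 : α ≤ 0) {η : ℕ → ℕ} (hη : StrictMono η) {D : ℕ}
    (hD : 0 < D) (n : ℕ) :
    alphaMass α (range η) n ≤ D * alphaMass α (range fun q => η (D * (q + 1))) n + 2 * D := by
  have hcover : range η ⊆ ((Finset.range D).image η : Set ℕ) ∪
      ⋃ r ∈ Finset.range D, range fun q => η (D * (q + 1) + r) := by
    rintro _ ⟨t, rfl⟩
    rcases lt_or_ge t D with ht | ht
    · left
      simp only [Finset.coe_image, Finset.coe_range]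
      exact ⟨t, ht, rfl⟩
    · right
      simp only [Set.mem_iUnion, Set.mem_range, Finset.mem_range]
      refine ⟨t % D, Nat.mod_lt t hD, t / D - 1, ?_⟩
      have : 1 ≤ t / D := (Nat.one_le_div_iff hD).mpr ht
      rw [Nat.sub_add_cancel this, Nat.div_add_mod]
  have hblock : ∀ r, alphaMass α (range fun q => η (D * (q + 1) + r)) n ≤
      alphaMass α (range fun q => η (D * (q + 1))) n + 1 := fun r =>
    alphaMass_range_le_of_le hα0
      (hη.comp fun a b hab => Nat.mul_lt_mul_of_pos_left (by omega) hD)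
      (hη.comp fun a b hab => Nat.add_lt_add_right (Nat.mul_lt_mul_of_pos_left (by omega) hD) r)
      (fun q => hη.monotone (Nat.le_add_right _ r)) n
  calc alphaMass α (range η) n
      ≤ alphaMass α ((Finset.range D).image η : Set ℕ) n +
          ∑ r ∈ Finset.range D, alphaMass α (range fun q => η (D * (q + 1) + r)) n := by
        refine (alphaMass_mono hcover n).trans ((alphaMass_union_le _ _ n).trans ?_)
        gcongr
        exact alphaMass_biUnion_le _ _ n
    _ ≤ D + ∑ r ∈ Finset.range D, (alphaMass α (range fun q => η (D * (q + 1))) n + 1) := by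
        refine add_le_add ?_ (Finset.sum_le_sum fun r _ => hblock r)
        refine (alphaMass_coe_finset_le_card hα0 _ n).trans ?_
        exact_mod_cast Finset.card_image_le.trans (Finset.card_range D).le
    _ = D * alphaMass α (range fun q => η (D * (q + 1))) n + 2 * D := by
        rw [Finset.sum_const, Finset.card_range, nsmul_eq_mul]
        ring

lemma strechable_alphaIdeal (hα : -1 ≤ α) (hα0 : α ≤ 0) : Strechable (alphaIdeal α) := by
  intro k hk A hA
  refine notMem_alphaIdeal_of_alphaMass_le hα hα0 hk (C := (k : ℝ) ^ (-α)) (E := 0)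
    (by positivity) (fun n => ?_) hA
  rw [alphaMass_image_mul hk, ← mul_assoc, ← Real.rpow_add (by positivity), neg_add_cancel,
    Real.rpow_zero, one_mul, add_zero]

lemma notMem_alphaIdeal_range_of_le (hα : -1 ≤ α) (hα0 : α ≤ 0) {ξ η : ℕ → ℕ}
    (hξ : StrictMono ξ) (hη : StrictMono η) (hY : range η ∉ alphaIdeal α) {k D : ℕ} (hk : 0 < k)
    (hD : 0 < D) (hle : ∀ i, ξ i ≤ k * η (D * (i + 1))) : range ξ ∉ alphaIdeal α := by
  have hsub : range (fun q => η (D * (q + 1))) ∉ alphaIdeal α :=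
    notMem_alphaIdeal_of_alphaMass_le hα hα0 one_pos (Nat.cast_pos.mpr hD)
      (fun n => by rw [one_mul]; exact alphaMass_range_le_mul_subsequence hα0 hη hD n) hY
  have hscaled : range (fun i => k * η (D * (i + 1))) ∉ alphaIdeal α := by
    rw [show (fun i => k * η (D * (i + 1))) = (k * ·) ∘ fun q => η (D * (q + 1)) from rfl,
      Set.range_comp]
    exact strechable_alphaIdeal hα hα0 k hk _ hsub
  have hζ : StrictMono fun i => k * η (D * (i + 1)) := fun a b hab =>
    Nat.mul_lt_mul_of_pos_left (hη (Nat.mul_lt_mul_of_pos_left (by omega) hD)) hk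
  exact notMem_alphaIdeal_of_alphaMass_le hα hα0 one_pos one_pos
    (fun n => by rw [one_mul, one_mul]; exact alphaMass_range_le_of_le hα0 hξ hζ hle n) hscaled

lemma thinnable_alphaIdeal_of_nonpos (hα : -1 ≤ α) (hα0 : α ≤ 0) :
    Thinnable (alphaIdeal α) := by
  have hrange : ∀ {S : Set ℕ}, S.Infinite → range (enumOf S) = S := Nat.range_nth_of_infinite
  have hmono : ∀ {S : Set ℕ}, S.Infinite → StrictMono (enumOf S) := Nat.nth_strictMono
  refine ⟨?_, ?_, ?_⟩
  · rintro A B ⟨c, hc, hA⟩ hB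
    obtain ⟨hAinf, D, hD, hDle⟩ := hA.infinite_and_exists_enumOf_le hc
    have hBinf := infinite_of_notMem_alphaIdeal hα hα0 hB
    rw [← hrange hBinf] at hB
    rw [idxSet, ← hrange hBinf, ← Set.range_comp]
    refine notMem_alphaIdeal_range_of_le hα hα0 ((hmono hAinf).comp (hmono hBinf))
      (hmono hBinf) hB hD one_pos fun i => ?_
    calc enumOf A (enumOf B i) ≤ D * (enumOf B i + 1) := hDle _
      _ ≤ D * enumOf B (1 * (i + 1)) := by
        rw [one_mul]
        exact Nat.mul_le_mul_left D (hmono hBinf (Nat.lt_succ_self i))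
  · rintro A B ⟨c, hc, hA⟩ hB
    obtain ⟨hAinf, D, hD, hDle⟩ := hA.infinite_and_exists_enumOf_le hc
    have hBinf := infinite_of_notMem_alphaIdeal hα hα0 hB
    rw [← hrange hBinf] at hB
    rw [idxSet, ← hrange hAinf, ← Set.range_comp]
    refine notMem_alphaIdeal_range_of_le hα hα0 ((hmono hBinf).comp (hmono hAinf))
      (hmono hBinf) hB one_pos hD fun i => ?_
    rw [one_mul]
    exact (hmono hBinf).monotone (hDle i)
  · intro X Y hX hY hXY hYI
    rw [← hrange hY] at hYI
    rw [← hrange hX]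
    refine notMem_alphaIdeal_range_of_le hα hα0 (hmono hX) (hmono hY) hYI one_pos one_pos
      fun i => (hXY i).trans ?_
    rw [one_mul, one_mul]
    exact (hmono hY).monotone (Nat.le_succ i)

end NonposExponent

section NonnegExponent

variable {α : ℝ}

lemma alphaMass_zero_univ (n : ℕ) : alphaMass 0 univ n = n := by
  simp [alphaMass]

lemma alphaMass_le_rpow_mul_alphaMass_zero (hα : 0 ≤ α) (S : Set ℕ) (n : ℕ) :
    alphaMass α S n ≤ (n : ℝ) ^ α * alphaMass 0 S n := by
  rw [alphaMass, alphaMass, Finset.mul_sum]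
  refine Finset.sum_le_sum fun i hi => ?_
  by_cases h : i ∈ S
  · simp only [Set.indicator_of_mem h, Real.rpow_zero, mul_one]
    exact Real.rpow_le_rpow (by positivity) (by exact_mod_cast (Finset.mem_Icc.mp hi).2) hα
  · simp [Set.indicator_of_notMem h]

/-- `alphaMass 0 S n` counts `S ∩ [1, n]`; the points of `S ∩ [1, n]` above half that count
already carry the bound. -/
lemma half_rpow_mul_half_le_alphaMass (hα : 0 ≤ α) (S : Set ℕ) (n : ℕ) :
    (alphaMass 0 S n / 2) ^ α * (alphaMass 0 S n / 2) ≤ alphaMass α S n := by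
  classical
  set F := (Finset.Icc 1 n).filter (· ∈ S)
  have hm : alphaMass 0 S n = F.card := by simp [alphaMass_eq_sum_filter, F]
  obtain ⟨m, hFm⟩ : ∃ m, F.card = m := ⟨_, rfl⟩
  set G := F.filter (fun i => m / 2 < i)
  have hG : (m : ℝ) / 2 ≤ G.card := by
    have hcover : F ⊆ G ∪ Finset.Icc 1 (m / 2) := fun i hi => by
      have h1 := (Finset.mem_Icc.mp (Finset.mem_filter.mp hi).1).1
      rw [Finset.mem_union, Finset.mem_filter, Finset.mem_Icc]
      by_cases h : m / 2 < i
      exacts [Or.inl ⟨hi, h⟩, Or.inr ⟨h1, not_lt.mp h⟩]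
    have := (Finset.card_le_card hcover).trans (Finset.card_union_le _ _)
    rw [Nat.card_Icc, hFm] at this
    rw [div_le_iff₀ two_pos]
    exact_mod_cast (by omega : m ≤ G.card * 2)
  have hweight : ∀ i ∈ G, ((m : ℝ) / 2) ^ α ≤ (i : ℝ) ^ α := fun i hi => by
    have hi : m / 2 < i := (Finset.mem_filter.mp hi).2
    refine Real.rpow_le_rpow (by positivity) ?_ hα
    rw [div_le_iff₀ two_pos]
    exact_mod_cast (by omega : m ≤ i * 2)
  rw [hm, hFm, alphaMass_eq_sum_filter]
  calc ((m : ℝ) / 2) ^ α * (m / 2) ≤ G.card • ((m : ℝ) / 2) ^ α := by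
        rw [nsmul_eq_mul, mul_comm]
        gcongr
    _ ≤ ∑ i ∈ G, (i : ℝ) ^ α := Finset.card_nsmul_le_sum _ _ _ hweight
    _ ≤ ∑ i ∈ F, (i : ℝ) ^ α :=
        Finset.sum_le_sum_of_subset_of_nonneg (Finset.filter_subset _ _) fun i _ _ => by positivity

lemma alphaIdeal_eq_alphaIdeal_zero (hα : 0 ≤ α) : alphaIdeal α = alphaIdeal 0 := by
  ext S
  rw [← not_iff_not, notMem_alphaIdeal_iff, notMem_alphaIdeal_iff]
  simp only [alphaMass_zero_univ]
  constructor
  · rintro ⟨δ, hδ, hfreq⟩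
    refine ⟨δ / 2 ^ (α + 1), by positivity,
      (hfreq.and_eventually (eventually_ge_atTop 1)).mono fun n ⟨h, hn⟩ => ?_⟩
    have hnpos : (0 : ℝ) < n := by exact_mod_cast hn
    have hW := half_rpow_mul_half_le_alphaMass hα univ n
    rw [alphaMass_zero_univ] at hW
    refine le_of_mul_le_mul_left ?_ (Real.rpow_pos_of_pos hnpos α)
    calc (n : ℝ) ^ α * (δ / 2 ^ (α + 1) * n) = δ * (((n : ℝ) / 2) ^ α * (n / 2)) := by
          rw [Real.div_rpow hnpos.le two_pos.le, Real.rpow_add_one two_ne_zero]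
          field_simp
      _ ≤ δ * alphaMass α univ n := by gcongr
      _ ≤ alphaMass α S n := h
      _ ≤ (n : ℝ) ^ α * alphaMass 0 S n := alphaMass_le_rpow_mul_alphaMass_zero hα S n
  · rintro ⟨δ, hδ, hfreq⟩
    refine ⟨(δ / 2) ^ α * (δ / 2), by positivity, hfreq.mono fun n h => ?_⟩
    have hW := alphaMass_le_rpow_mul_alphaMass_zero hα univ n
    rw [alphaMass_zero_univ] at hW
    calc (δ / 2) ^ α * (δ / 2) * alphaMass α univ n
        ≤ (δ / 2) ^ α * (δ / 2) * ((n : ℝ) ^ α * n) := by gcongr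
      _ = (δ * n / 2) ^ α * (δ * n / 2) := by
          rw [mul_div_right_comm, Real.mul_rpow (by positivity) (by positivity)]
          ring
      _ ≤ (alphaMass 0 S n / 2) ^ α * (alphaMass 0 S n / 2) := by
          have h0 : 0 ≤ δ * n / 2 := by positivity
          have hle : δ * n / 2 ≤ alphaMass 0 S n / 2 := by linarith
          exact mul_le_mul (Real.rpow_le_rpow h0 hle hα) hle h0
            (Real.rpow_nonneg (h0.trans hle) α)
      _ ≤ alphaMass α S n := half_rpow_mul_half_le_alphaMass hα S n

end NonnegExponent

/-- For every real `α ≥ -1`, the ideal `I_α` is thinnable. -/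
theorem stmt2 (α : ℝ) (hα : -1 ≤ α) : Thinnable (alphaIdeal α) := by
  rcases le_total α 0 with hα0 | hα0
  · exact thinnable_alphaIdeal_of_nonpos hα hα0
  · rw [alphaIdeal_eq_alphaIdeal_zero hα0]
    exact thinnable_alphaIdeal_of_nonpos (by norm_num) le_rfl
end

section
/- Let α > 0 be real and let X, Y ⊆ ℕ be infinite sets with canonical enumerations {x_n} and {y_n} such that x_n ≤ y_n for all n (equivalently |Y ∩ [1,n]| ≤ |X ∩ [1,n]| for all n). If d*_α(Y) > 0, then d*_α(X) > 0; that is, if Y ∉ I_α then X ∉ I_α. -/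
open Filter Topology MeasureTheory Set

lemma sum_Icc_card_le (f : ℕ → ℝ) (hf : Monotone f) :
    ∀ s : Finset ℕ, 0 ∉ s → ∑ i ∈ Finset.Icc 1 s.card, f i ≤ ∑ i ∈ s, f i := by
  intro s
  induction s using Finset.strongInduction with
  | _ s ih =>
    intro hs
    rcases s.eq_empty_or_nonempty with rfl | hne
    · simp
    have hMs : s.max' hne ∈ s := s.max'_mem hne
    have hcard : s.card ≤ s.max' hne := by
      have hsub : s ⊆ Finset.Icc 1 (s.max' hne) := fun x hx =>
        Finset.mem_Icc.mpr ⟨Nat.one_le_iff_ne_zero.mpr (fun h0 => hs (h0 ▸ hx)), s.le_max' x hx⟩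
      simpa using Finset.card_le_card hsub
    have h1 : 1 ≤ s.card := Finset.card_pos.mpr hne
    have hIH := ih (s.erase (s.max' hne)) (Finset.erase_ssubset hMs)
        (fun h => hs (Finset.mem_of_mem_erase h))
    rw [Finset.card_erase_of_mem hMs] at hIH
    have key : Finset.Icc 1 s.card = insert s.card (Finset.Icc 1 (s.card - 1)) := by
      ext x; simp only [Finset.mem_Icc, Finset.mem_insert]; omega
    have hnotmem : s.card ∉ Finset.Icc 1 (s.card - 1) := by
      simp only [Finset.mem_Icc]; omega
    rw [key, Finset.sum_insert hnotmem, ← Finset.add_sum_erase s f hMs]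
    exact add_le_add (hf hcard) hIH

lemma D_upper (α : ℝ) (hα : 0 ≤ α) (m : ℕ) :
    ∑ i ∈ Finset.Icc 1 m, (i : ℝ) ^ α ≤ (m : ℝ) ^ (1 + α) := by
  rcases Nat.eq_zero_or_pos m with rfl | hm
  · simp [Real.zero_rpow (by positivity : (1:ℝ) + α ≠ 0)]
  have hm' : (0:ℝ) < m := by exact_mod_cast hm
  calc ∑ i ∈ Finset.Icc 1 m, (i : ℝ) ^ α
      ≤ (Finset.Icc 1 m).card • (m : ℝ) ^ α := by
        refine Finset.sum_le_card_nsmul _ _ _ (fun i hi => ?_)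
        exact Real.rpow_le_rpow (Nat.cast_nonneg i)
          (Nat.cast_le.mpr (Finset.mem_Icc.mp hi).2) hα
    _ = (m : ℝ) * (m : ℝ) ^ α := by
        rw [nsmul_eq_mul, Nat.card_Icc]; norm_num
    _ = (m : ℝ) ^ (1 + α) := by rw [Real.rpow_add hm', Real.rpow_one]

lemma D_lower (α : ℝ) (hα : 0 ≤ α) (m : ℕ) (hm : 1 ≤ m) :
    ((m : ℝ) / 2) ^ (1 + α) ≤ ∑ i ∈ Finset.Icc 1 m, (i : ℝ) ^ α := by
  have hm' : (0:ℝ) < m := by exact_mod_cast hm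
  have hhalf : (0:ℝ) < (m:ℝ)/2 := by linarith
  have hsub : Finset.Icc (m/2 + 1) m ⊆ Finset.Icc 1 m :=
    Finset.Icc_subset_Icc (by omega) le_rfl
  have hcard : (Finset.Icc (m/2+1) m).card = m - m/2 := by
    rw [Nat.card_Icc]; omega
  have hterm : ∀ i ∈ Finset.Icc (m/2+1) m, ((m:ℝ)/2)^α ≤ (i:ℝ)^α := by
    intro i hi
    refine Real.rpow_le_rpow (le_of_lt hhalf) ?_ hα
    have h1 : m/2 + 1 ≤ i := (Finset.mem_Icc.mp hi).1
    have h2 : m ≤ 2 * (m/2) + 2 := by omega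
    have h1' : ((m/2 : ℕ) : ℝ) + 1 ≤ (i:ℝ) := by exact_mod_cast h1
    have h2' : (m:ℝ) ≤ 2 * ((m/2 : ℕ) : ℝ) + 2 := by exact_mod_cast h2
    linarith
  calc ((m:ℝ)/2)^(1+α) = ((m:ℝ)/2) * ((m:ℝ)/2)^α := by
        rw [Real.rpow_add hhalf, Real.rpow_one]
    _ ≤ ((m - m/2 : ℕ) : ℝ) * ((m:ℝ)/2)^α := by
        have : (m:ℝ)/2 ≤ ((m - m/2 : ℕ) : ℝ) := by
          have h3 : m ≤ 2 * (m - m/2) := by omega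
          have h3' : (m:ℝ) ≤ 2 * ((m - m/2 : ℕ) : ℝ) := by exact_mod_cast h3
          linarith
        exact mul_le_mul_of_nonneg_right this (Real.rpow_nonneg (le_of_lt hhalf) α)
    _ ≤ ∑ i ∈ Finset.Icc (m/2+1) m, (i:ℝ)^α := by
        rw [← nsmul_eq_mul, ← hcard]
        exact Finset.card_nsmul_le_sum _ _ _ hterm
    _ ≤ ∑ i ∈ Finset.Icc 1 m, (i:ℝ)^α :=
        Finset.sum_le_sum_of_subset_of_nonneg hsub
          (fun i _ _ => Real.rpow_nonneg (Nat.cast_nonneg i) α)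

lemma count_mono_of_seqLE (X Y : Set ℕ) (hX : X.Infinite) (hle : seqLE X Y) (m : ℕ)
    [DecidablePred (· ∈ X)] [DecidablePred (· ∈ Y)] :
    Nat.count (· ∈ Y) m ≤ Nat.count (· ∈ X) m := by
  have hX' : {n | (fun i => i ∈ X) n}.Infinite := hX
  have h1 : m ≤ Nat.nth (· ∈ X) (Nat.count (· ∈ X) m) := Nat.le_nth_count hX' m
  exact Nat.le_nth_of_count_le (h1.trans (hle _))


/-- If `α > 0`, `X, Y` are infinite with `x_n ≤ y_n` for all `n`, and `d⋆_α(Y) > 0`,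
then `d⋆_α(X) > 0`, i.e. if `Y ∉ I_α` then `X ∉ I_α`. -/
theorem stmt3 (α : ℝ) (hα : 0 < α) (X Y : Set ℕ) (hX : X.Infinite) (hY : Y.Infinite)
    (hle : seqLE X Y) (h : 0 < upperAlphaDensity α Y) :
    0 < upperAlphaDensity α X ∧ X ∉ alphaIdeal α := by
  classical
  have hα' : (0:ℝ) ≤ α := hα.le
  set g : ℕ → ℝ := fun i => (i : ℝ) ^ α with hg
  have hgmono : Monotone g := fun a b hab =>
    Real.rpow_le_rpow (Nat.cast_nonneg a) (Nat.cast_le.mpr hab) hα'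
  have hg0 : ∀ i, 0 ≤ g i := fun i => Real.rpow_nonneg (Nat.cast_nonneg i) α
  set D : ℕ → ℝ := fun m => ∑ i ∈ Finset.Icc 1 m, g i with hD
  set rY : ℕ → ℝ := fun n => (∑ i ∈ Finset.Icc 1 n, Y.indicator g i) / D n with hrYdef
  set rX : ℕ → ℝ := fun n => (∑ i ∈ Finset.Icc 1 n, X.indicator g i) / D n with hrXdef
  have hYd : upperAlphaDensity α Y = limsup rY atTop := rfl
  have hXd : upperAlphaDensity α X = limsup rX atTop := rfl
  have hDnonneg : ∀ m, 0 ≤ D m := fun m => Finset.sum_nonneg (fun i _ => hg0 i)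
  have hDpos : ∀ m : ℕ, 1 ≤ m → 0 < D m := by
    intro m hm
    have hm' : (0:ℝ) < m := by exact_mod_cast hm
    exact lt_of_lt_of_le (Real.rpow_pos_of_pos (by linarith) (1+α)) (D_lower α hα' m hm)
  have hind_nonneg : ∀ (S : Set ℕ) i, (0:ℝ) ≤ S.indicator g i :=
    fun S i => Set.indicator_nonneg (fun j _ => hg0 j) i
  have hnum_le : ∀ (S : Set ℕ) n, ∑ i ∈ Finset.Icc 1 n, S.indicator g i ≤ D n :=
    fun S n => Finset.sum_le_sum (fun i _ => Set.indicator_le_self' (fun j _ => hg0 j) i)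
  have hr_nonneg : ∀ (S : Set ℕ) n, (0:ℝ) ≤ (∑ i ∈ Finset.Icc 1 n, S.indicator g i) / D n :=
    fun S n => div_nonneg (Finset.sum_nonneg fun i _ => hind_nonneg S i) (hDnonneg n)
  have hr_le_one : ∀ (S : Set ℕ) n, (∑ i ∈ Finset.Icc 1 n, S.indicator g i) / D n ≤ 1 := by
    intro S n
    rcases Nat.eq_zero_or_pos n with rfl | hn
    · simp [hD]
    · exact div_le_one_of_le₀ (hnum_le S n) (hDnonneg n)
  set c := upperAlphaDensity α Y with hc
  have hfreqY : ∃ᶠ n in atTop, c/2 < rY n := by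
    apply frequently_lt_of_lt_limsup
    · exact isCoboundedUnder_le_of_le atTop (fun n => hr_nonneg Y n)
    · rw [← hYd]; linarith
  set δ : ℝ := (c/2) * (1/2 : ℝ) ^ (1+α) with hδdef
  have hδpos : 0 < δ := by
    have := Real.rpow_pos_of_pos (by norm_num : (0:ℝ) < 1/2) (1+α)
    have hc2 : 0 < c/2 := by linarith
    exact mul_pos hc2 this
  set ε : ℝ := (δ/4) ^ (1+α) with hεdef
  have hεpos : 0 < ε := Real.rpow_pos_of_pos (by linarith) _
  obtain ⟨n₀, hn₀⟩ := exists_nat_gt (4/δ)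
  have key : ∀ n : ℕ, n₀ ≤ n → c/2 < rY n → ε ≤ rX n := by
    intro n hn hr
    have hnn₀ : (n₀:ℝ) ≤ n := Nat.cast_le.mpr hn
    have hδn : 4 < δ * n := by
      have h4 : 4/δ < (n:ℝ) := lt_of_lt_of_le hn₀ hnn₀
      calc (4:ℝ) = δ * (4/δ) := by field_simp
        _ < δ * n := by exact mul_lt_mul_of_pos_left h4 hδpos
    have hn1 : 1 ≤ n := by
      by_contra hcon
      have : n = 0 := by omega
      subst this
      simp at hδn; linarith
    have hnR : (0:ℝ) < n := by exact_mod_cast hn1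
    have hDn : 0 < D n := hDpos n hn1
    set FY := (Finset.Icc 1 n).filter (· ∈ Y) with hFY
    set FX := (Finset.Icc 1 n).filter (· ∈ X) with hFX
    have hsumY : ∑ i ∈ Finset.Icc 1 n, Y.indicator g i = ∑ i ∈ FY, g i := by
      rw [hFY, Finset.sum_filter]
      exact Finset.sum_congr rfl (fun i _ => Set.indicator_apply Y g i)
    have hsumX : ∑ i ∈ Finset.Icc 1 n, X.indicator g i = ∑ i ∈ FX, g i := by
      rw [hFX, Finset.sum_filter]
      exact Finset.sum_congr rfl (fun i _ => Set.indicator_apply X g i)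
    -- numerator Y upper bound
    have hYub : ∑ i ∈ FY, g i ≤ (FY.card : ℝ) * (n:ℝ)^α := by
      rw [← nsmul_eq_mul]
      refine Finset.sum_le_card_nsmul _ _ _ (fun i hi => ?_)
      have : i ≤ n := (Finset.mem_Icc.mp (Finset.mem_filter.mp hi).1).2
      exact hgmono this
    -- from hr : c/2 < rY n
    have hnumY : (c/2) * D n < ∑ i ∈ FY, g i := by
      rw [← hsumY]
      have hr' : c/2 < (∑ i ∈ Finset.Icc 1 n, Y.indicator g i) / D n := hr
      exact (lt_div_iff₀ hDn).mp hr'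
    -- counting
    have hcount : FY.card ≤ FX.card + 1 := by
      have h1 : FY.card ≤ Nat.count (· ∈ Y) (n+1) := by
        rw [Nat.count_eq_card_filter_range]
        refine Finset.card_le_card (Finset.filter_subset_filter _ ?_)
        intro x hx
        simp only [Finset.mem_Icc] at hx
        simp only [Finset.mem_range]; omega
      have h2 : Nat.count (· ∈ Y) (n+1) ≤ Nat.count (· ∈ X) (n+1) :=
        count_mono_of_seqLE X Y hX hle (n+1)
      have h3 : Nat.count (· ∈ X) (n+1) ≤ FX.card + 1 := by
        rw [Nat.count_eq_card_filter_range]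
        have hsub : (Finset.range (n+1)).filter (· ∈ X) ⊆ insert 0 FX := by
          intro x hx
          simp only [Finset.mem_filter, Finset.mem_range] at hx
          rcases Nat.eq_zero_or_pos x with rfl | hxpos
          · exact Finset.mem_insert_self 0 _
          · refine Finset.mem_insert_of_mem ?_
            rw [hFX]
            exact Finset.mem_filter.mpr ⟨Finset.mem_Icc.mpr ⟨hxpos, by omega⟩, hx.2⟩
        calc ((Finset.range (n+1)).filter (· ∈ X)).card ≤ (insert 0 FX).card :=
              Finset.card_le_card hsub
          _ ≤ FX.card + 1 := Finset.card_insert_le _ _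
      omega
    set k := FX.card with hk
    -- lower bound on k
    have hnα : (0:ℝ) < (n:ℝ)^α := Real.rpow_pos_of_pos hnR α
    have hkY : (c/2) * D n < ((k:ℝ) + 1) * (n:ℝ)^α := by
      have hcastle : (FY.card : ℝ) ≤ (k:ℝ) + 1 := by exact_mod_cast hcount
      calc (c/2) * D n < ∑ i ∈ FY, g i := hnumY
        _ ≤ (FY.card : ℝ) * (n:ℝ)^α := hYub
        _ ≤ ((k:ℝ) + 1) * (n:ℝ)^α := mul_le_mul_of_nonneg_right hcastle (le_of_lt hnα)
    have hDnlow : δ * n * (n:ℝ)^α ≤ (c/2) * D n := by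
      have hlow := D_lower α hα' n hn1
      have heq : ((n:ℝ)/2)^(1+α) = (1/2:ℝ)^(1+α) * ((n:ℝ) * (n:ℝ)^α) := by
        have : (n:ℝ)/2 = (1/2:ℝ) * n := by ring
        rw [this, Real.mul_rpow (by norm_num) (le_of_lt hnR), Real.rpow_add hnR,
          Real.rpow_one]
      have hc2 : (0:ℝ) ≤ c/2 := by linarith
      calc δ * n * (n:ℝ)^α = (c/2) * ((1/2:ℝ)^(1+α) * ((n:ℝ) * (n:ℝ)^α)) := by
            rw [hδdef]; ring
        _ = (c/2) * ((n:ℝ)/2)^(1+α) := by rw [heq]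
        _ ≤ (c/2) * D n := mul_le_mul_of_nonneg_left hlow hc2
    have hkδ : δ * n < (k:ℝ) + 1 := by
      have := lt_of_le_of_lt hDnlow hkY
      exact lt_of_mul_lt_mul_right this (le_of_lt hnα)
    have hk2 : δ * n / 2 ≤ (k:ℝ) := by linarith
    have hk1 : 1 ≤ k := by
      have : (1:ℝ) ≤ (k:ℝ) := by linarith
      exact_mod_cast this
    -- numerator X lower bound
    have h0FX : 0 ∉ FX := by
      rw [hFX]
      simp [Finset.mem_filter]
    have hnumX : D k ≤ ∑ i ∈ FX, g i := sum_Icc_card_le g hgmono FX h0FX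
    have hDk : ((k:ℝ)/2)^(1+α) ≤ D k := D_lower α hα' k hk1
    have hDnub : D n ≤ (n:ℝ)^(1+α) := D_upper α hα' n
    have hstep : (δ*(n:ℝ)/4)^(1+α) ≤ ((k:ℝ)/2)^(1+α) :=
      Real.rpow_le_rpow (by positivity) (by linarith) (by linarith)
    have heps : (δ*(n:ℝ)/4)^(1+α) = ε * (n:ℝ)^(1+α) := by
      rw [hεdef]
      rw [← Real.mul_rpow (by linarith) (le_of_lt hnR)]
      congr 1
      ring
    have hnpow : (0:ℝ) < (n:ℝ)^(1+α) := Real.rpow_pos_of_pos hnR _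
    have hfinal : ε * (n:ℝ)^(1+α) ≤ ∑ i ∈ Finset.Icc 1 n, X.indicator g i := by
      rw [hsumX, ← heps]
      exact le_trans hstep (le_trans hDk hnumX)
    calc ε = ε * (n:ℝ)^(1+α) / (n:ℝ)^(1+α) := by field_simp
      _ ≤ ε * (n:ℝ)^(1+α) / D n := by
          apply div_le_div_of_nonneg_left (by positivity) hDn hDnub
      _ ≤ rX n := div_le_div_of_nonneg_right hfinal hDn.le
  have hfreqX : ∃ᶠ n in atTop, ε ≤ rX n :=
    (hfreqY.and_eventually (eventually_ge_atTop n₀)).mono (fun n hn => key n hn.2 hn.1)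
  have hbddX : IsBoundedUnder (· ≤ ·) atTop rX :=
    ⟨1, eventually_map.mpr (Eventually.of_forall (fun n => hr_le_one X n))⟩
  have hlim : ε ≤ limsup rX atTop := le_limsup_of_frequently_le hfreqX hbddX
  have hpos : 0 < upperAlphaDensity α X := by rw [hXd]; linarith
  exact ⟨hpos, fun hmem => ne_of_gt hpos hmem⟩
end

section
/- Let α > 0 be real and let Y ⊆ ℕ be an infinite set with canonical enumeration {y_n : n ∈ ℕ} such that d*_α(Y) > 0. Set λ := 1 − (1 − d*_α(Y)/2)^{1/(α+1)} > 0. Then there exists an infinite set S ⊆ ℕ such that |Y ∩ [1, y_n]| ≥ λ·y_n for all n ∈ S. -/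
/-!
Suppose `|Y ∩ [1, y_n]| < λ y_n` for all large `n` and let `y = y_n`. The `α`-mass
`∑_{i ∈ Y, i ≤ y} i^α` is at most that of the `λ y` largest integers of `[1, y]`; comparing power
sums with `(α+1)`-st powers (Bernoulli's inequality, telescoped), it is at most
`((y+1)^(α+1) - ((1-λ) y)^(α+1)) / (α+1) ≈ (d⋆_α(Y) / 2) y^(α+1) / (α+1)`, while
`y^(α+1) / (α+1) ≤ ∑_{i ≤ y} i^α`. The `α`-ratio at any `m` is bounded by the ratio at the
largest element of `Y` not exceeding `m`, so `d⋆_α(Y) ≤ d⋆_α(Y) / 2`, a contradiction.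
-/

open Filter Topology MeasureTheory Set

theorem rpow_add_mul_le_rpow_add {p x h : ℝ} (hp : 1 ≤ p) (hx : 0 < x) (hxh : 0 ≤ x + h) :
    x ^ p + p * x ^ (p - 1) * h ≤ (x + h) ^ p := by
  have hs : -1 ≤ h / x := by rw [le_div_iff₀ hx]; linarith
  have hsplit : (x + h) ^ p = x ^ p * (1 + h / x) ^ p := by
    rw [← Real.mul_rpow hx.le (by linarith)]
    congr 1
    field_simp
  have hxp : x ^ p = x ^ (p - 1) * x := by rw [Real.rpow_sub_one hx.ne']; field_simp
  calc x ^ p + p * x ^ (p - 1) * h = x ^ p * (1 + p * (h / x)) := by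
        rw [hxp]; field_simp
    _ ≤ (x + h) ^ p := by
        rw [hsplit]
        exact mul_le_mul_of_nonneg_left (one_add_mul_self_le_rpow_one_add hs hp) (by positivity)

section PowerSums

variable {α : ℝ}

theorem rpow_succ_sub_rpow_sub_one_le (hα : 0 ≤ α) {x : ℝ} (hx : 1 ≤ x) :
    x ^ (α + 1) - (x - 1) ^ (α + 1) ≤ (α + 1) * x ^ α := by
  have := rpow_add_mul_le_rpow_add (p := α + 1) (h := -1) (by linarith) (by linarith)
    (by linarith : 0 ≤ x + -1)
  rw [add_sub_cancel_right, ← sub_eq_add_neg] at this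
  linarith

theorem mul_rpow_le_rpow_add_one_sub (hα : 0 ≤ α) {x : ℝ} (hx : 0 < x) :
    (α + 1) * x ^ α ≤ (x + 1) ^ (α + 1) - x ^ (α + 1) := by
  have := rpow_add_mul_le_rpow_add (p := α + 1) (h := 1) (by linarith) hx (by linarith)
  rw [add_sub_cancel_right] at this
  linarith

theorem rpow_succ_le_mul_sum_Icc_rpow (hα : 0 ≤ α) (n : ℕ) :
    (n : ℝ) ^ (α + 1) ≤ (α + 1) * ∑ i ∈ Finset.Icc 1 n, (i : ℝ) ^ α := by
  induction n with
  | zero => simp [Real.zero_rpow (by linarith : α + 1 ≠ 0)]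
  | succ n ih =>
    have := rpow_succ_sub_rpow_sub_one_le hα (x := n + 1) (by simp)
    rw [Finset.sum_Icc_succ_top (by omega), mul_add]
    push_cast at this ⊢
    rw [add_sub_cancel_right] at this
    linarith

theorem mul_sum_Ioc_rpow_le (hα : 0 ≤ α) {k m : ℕ} (hkm : k ≤ m) :
    (α + 1) * ∑ i ∈ Finset.Ioc k m, (i : ℝ) ^ α ≤
      ((m : ℝ) + 1) ^ (α + 1) - ((k : ℝ) + 1) ^ (α + 1) := by
  induction m, hkm using Nat.le_induction with
  | base => simp
  | succ m hkm ih =>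
    have := mul_rpow_le_rpow_add_one_sub hα (x := m + 1) (by positivity)
    rw [Finset.sum_Ioc_succ_top hkm, mul_add]
    push_cast
    linarith

end PowerSums

theorem Monotone.sum_le_sum_Ioc_sub_card {M : Type*} [AddCommMonoid M] [PartialOrder M]
    [IsOrderedCancelAddMonoid M] {f : ℕ → M} (hf : Monotone f) {T : Finset ℕ} {m : ℕ}
    (hT : T ⊆ Finset.Icc 1 m) : ∑ i ∈ T, f i ≤ ∑ i ∈ Finset.Ioc (m - T.card) m, f i := by
  set U := Finset.Ioc (m - T.card) m
  have hTm : T.card ≤ m := by simpa using Finset.card_le_card hT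
  have hcard : T.card = U.card := by simp only [U, Nat.card_Ioc]; omega
  -- Elements of `T \ U` lie below `m - #T`, those of `U \ T` above it, and there are equally many.
  rw [← Finset.sum_sdiff_le_sum_sdiff]
  calc ∑ i ∈ T \ U, f i ≤ (T \ U).card • f (m - T.card) := by
        refine Finset.sum_le_card_nsmul _ _ _ fun i hi => hf ?_
        have := hT (Finset.sdiff_subset hi)
        simp only [U, Finset.mem_sdiff, Finset.mem_Ioc, Finset.mem_Icc] at hi this
        omega
    _ = (U \ T).card • f (m - T.card) := by rw [Finset.card_sdiff_comm hcard]
    _ ≤ ∑ i ∈ U \ T, f i := by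
        refine Finset.card_nsmul_le_sum _ _ _ fun i hi => hf ?_
        simp only [U, Finset.mem_sdiff, Finset.mem_Ioc] at hi
        omega

noncomputable def alphaRatio (α : ℝ) (S : Set ℕ) (n : ℕ) : ℝ :=
  (∑ i ∈ Finset.Icc 1 n, S.indicator (fun i : ℕ => (i : ℝ) ^ α) i) /
    (∑ i ∈ Finset.Icc 1 n, (i : ℝ) ^ α)

theorem upperAlphaDensity_eq_limsup (α : ℝ) (S : Set ℕ) :
    upperAlphaDensity α S = limsup (alphaRatio α S) atTop := rfl

theorem sum_Icc_rpow_pos (α : ℝ) {n : ℕ} (hn : 1 ≤ n) : 0 < ∑ i ∈ Finset.Icc 1 n, (i : ℝ) ^ α :=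
  Finset.sum_pos (fun i hi => Real.rpow_pos_of_pos (by exact_mod_cast (Finset.mem_Icc.1 hi).1) α)
    (Finset.nonempty_Icc.2 hn)

theorem sum_Icc_indicator_rpow_nonneg (α : ℝ) (S : Set ℕ) (n : ℕ) :
    0 ≤ ∑ i ∈ Finset.Icc 1 n, S.indicator (fun i : ℕ => (i : ℝ) ^ α) i :=
  Finset.sum_nonneg fun _ _ => Set.indicator_nonneg (fun _ _ => by positivity) _

theorem alphaRatio_nonneg (α : ℝ) (S : Set ℕ) (n : ℕ) : 0 ≤ alphaRatio α S n :=
  div_nonneg (sum_Icc_indicator_rpow_nonneg α S n) (Finset.sum_nonneg fun _ _ => by positivity)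

theorem alphaRatio_le_one (α : ℝ) (S : Set ℕ) (n : ℕ) : alphaRatio α S n ≤ 1 :=
  div_le_one_of_le₀
    (Finset.sum_le_sum fun _ _ => Set.indicator_le_self' (fun _ _ => by positivity) _)
    (Finset.sum_nonneg fun _ _ => by positivity)

theorem isCoboundedUnder_alphaRatio (α : ℝ) (S : Set ℕ) :
    IsCoboundedUnder (· ≤ ·) atTop (alphaRatio α S) :=
  isCoboundedUnder_le_of_le atTop (alphaRatio_nonneg α S)

theorem upperAlphaDensity_le_one (α : ℝ) (S : Set ℕ) : upperAlphaDensity α S ≤ 1 :=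
  (upperAlphaDensity_eq_limsup α S).trans_le <|
    limsup_le_of_le (isCoboundedUnder_alphaRatio α S) (.of_forall (alphaRatio_le_one α S))

theorem alphaRatio_le_alphaRatio_of_forall_notMem {α : ℝ} {S : Set ℕ} {k m : ℕ} (hk : 1 ≤ k)
    (hkm : k ≤ m) (hgap : ∀ i, k < i → i ≤ m → i ∉ S) : alphaRatio α S m ≤ alphaRatio α S k := by
  have hsub : Finset.Icc 1 k ⊆ Finset.Icc 1 m := Finset.Icc_subset_Icc_right hkm
  have hmass : ∑ i ∈ Finset.Icc 1 k, S.indicator (fun i : ℕ => (i : ℝ) ^ α) i =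
      ∑ i ∈ Finset.Icc 1 m, S.indicator (fun i : ℕ => (i : ℝ) ^ α) i := by
    refine Finset.sum_subset hsub fun i hi hik => Set.indicator_of_notMem (hgap i ?_ ?_) _ <;>
      simp only [Finset.mem_Icc, not_and, not_le] at hi hik <;> omega
  rw [alphaRatio, alphaRatio, ← hmass]
  exact div_le_div_of_nonneg_left (sum_Icc_indicator_rpow_nonneg α S k) (sum_Icc_rpow_pos α hk)
    (Finset.sum_le_sum_of_subset_of_nonneg hsub fun _ _ _ => by positivity)

theorem mul_sum_Icc_indicator_rpow_le {α : ℝ} (hα : 0 ≤ α) (Y : Set ℕ) (y : ℕ) :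
    (α + 1) * ∑ i ∈ Finset.Icc 1 y, Y.indicator (fun i : ℕ => (i : ℝ) ^ α) i ≤
      ((y : ℝ) + 1) ^ (α + 1) - ((y : ℝ) - (Y ∩ Set.Icc 1 y).ncard + 1) ^ (α + 1) := by
  classical
  set T := (Finset.Icc 1 y).filter (· ∈ Y)
  have hT : T ⊆ Finset.Icc 1 y := Finset.filter_subset _ _
  have hcard : (Y ∩ Set.Icc 1 y).ncard = T.card := by
    rw [← Set.ncard_coe_finset]
    congr 1
    ext i
    simp only [T, Finset.coe_filter, Finset.mem_Icc, Set.mem_inter_iff, Set.mem_Icc,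
      Set.mem_ofPred_eq]
    tauto
  have hmass : ∑ i ∈ Finset.Icc 1 y, Y.indicator (fun i : ℕ => (i : ℝ) ^ α) i =
      ∑ i ∈ T, (i : ℝ) ^ α := by
    rw [Finset.sum_filter]
    exact Finset.sum_congr rfl fun i _ => Set.indicator_apply _ _ _
  have hmono : Monotone fun i : ℕ => (i : ℝ) ^ α := fun i j hij =>
    Real.rpow_le_rpow (by positivity) (by exact_mod_cast hij) hα
  have htail := mul_sum_Ioc_rpow_le hα (Nat.sub_le y T.card)
  rw [Nat.cast_sub (by simpa using Finset.card_le_card hT)] at htail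
  rw [hmass, hcard]
  exact (mul_le_mul_of_nonneg_left (hmono.sum_le_sum_Ioc_sub_card hT) (by linarith)).trans htail

theorem alphaRatio_le_of_ncard_le {α : ℝ} (hα : 0 ≤ α) {Y : Set ℕ} {y : ℕ} (hy : 1 ≤ y) {μ : ℝ}
    (hμ : 0 ≤ μ) (hc : ((Y ∩ Set.Icc 1 y).ncard : ℝ) ≤ (1 - μ) * y) :
    alphaRatio α Y y ≤ (1 + 1 / (y : ℝ)) ^ (α + 1) - μ ^ (α + 1) := by
  have hy0 : (0 : ℝ) < y := by exact_mod_cast hy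
  have hyp : (0 : ℝ) < (y : ℝ) ^ (α + 1) := by positivity
  set B := (1 + 1 / (y : ℝ)) ^ (α + 1) - μ ^ (α + 1)
  have hmass := mul_sum_Icc_indicator_rpow_le hα Y y
  have htop : ((y : ℝ) + 1) ^ (α + 1) = (1 + 1 / (y : ℝ)) ^ (α + 1) * (y : ℝ) ^ (α + 1) := by
    rw [← Real.mul_rpow (by positivity) hy0.le]
    congr 1
    field_simp
  have hbot : μ ^ (α + 1) * (y : ℝ) ^ (α + 1) ≤
      ((y : ℝ) - (Y ∩ Set.Icc 1 y).ncard + 1) ^ (α + 1) := by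
    rw [← Real.mul_rpow hμ hy0.le]
    exact Real.rpow_le_rpow (by positivity) (by linarith) (by linarith)
  have hB : (α + 1) * ∑ i ∈ Finset.Icc 1 y, Y.indicator (fun i : ℕ => (i : ℝ) ^ α) i ≤
      B * (y : ℝ) ^ (α + 1) := by
    simp only [B, sub_mul]
    linarith
  have hB0 : 0 ≤ B := by
    refine le_of_mul_le_mul_right ?_ hyp
    rw [zero_mul]
    exact (mul_nonneg (by linarith) (sum_Icc_indicator_rpow_nonneg α Y y)).trans hB
  rw [alphaRatio, div_le_iff₀ (sum_Icc_rpow_pos α hy)]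
  refine le_of_mul_le_mul_left (hB.trans ?_) (by linarith : (0 : ℝ) < α + 1)
  rw [mul_left_comm]
  exact mul_le_mul_of_nonneg_left (rpow_succ_le_mul_sum_Icc_rpow hα y) hB0

theorem Set.Infinite.eventually_imp_of_eventually_enumOf {Y : Set ℕ} (hY : Y.Infinite)
    {P : ℕ → Prop} (h : ∀ᶠ n in atTop, P (enumOf Y n)) : ∀ᶠ y in atTop, y ∈ Y → P y := by
  classical
  obtain ⟨N, hN⟩ := eventually_atTop.1 h
  filter_upwards [eventually_ge_atTop (enumOf Y N)] with y hy hyY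
  rw [← Nat.nth_count hyY]
  refine hN _ ?_
  calc N = Nat.count (· ∈ Y) (enumOf Y N) :=
        (Nat.count_nth_of_infinite (p := (· ∈ Y)) hY N).symm
    _ ≤ Nat.count (· ∈ Y) y := Nat.count_monotone _ hy

theorem Set.Infinite.tendsto_findGreatest_atTop {Y : Set ℕ} [DecidablePred (· ∈ Y)]
    (hY : Y.Infinite) : Tendsto (Nat.findGreatest (· ∈ Y)) atTop atTop := by
  refine tendsto_atTop.2 fun N => ?_
  obtain ⟨y, hyY, hNy⟩ := hY.exists_gt N
  filter_upwards [eventually_ge_atTop y] with m hm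
  exact hNy.le.trans (Nat.le_findGreatest hm hyY)

theorem eventually_findGreatest_mem {Y : Set ℕ} [DecidablePred (· ∈ Y)] (hY : Y.Nonempty) :
    ∀ᶠ m in atTop, Nat.findGreatest (· ∈ Y) m ∈ Y := by
  obtain ⟨y, hyY⟩ := hY
  filter_upwards [eventually_ge_atTop y] with m hm
  exact Nat.findGreatest_spec hm hyY

theorem tendsto_one_add_one_div_rpow_atTop (p : ℝ) :
    Tendsto (fun n : ℕ => (1 + 1 / (n : ℝ)) ^ p) atTop (𝓝 1) := by
  have h : Tendsto (fun n : ℕ => 1 + 1 / (n : ℝ)) atTop (𝓝 1) := by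
    simpa using tendsto_one_div_atTop_nhds_zero_nat.const_add (1 : ℝ)
  simpa using h.rpow_const (p := p) (Or.inl one_ne_zero)

theorem upperAlphaDensity_le_of_eventually_ncard_le {α : ℝ} (hα : 0 ≤ α) {Y : Set ℕ}
    (hY : Y.Infinite) {μ : ℝ} (hμ : 0 ≤ μ)
    (h : ∀ᶠ n in atTop, ((Y ∩ Set.Icc 1 (enumOf Y n)).ncard : ℝ) ≤ (1 - μ) * enumOf Y n) :
    upperAlphaDensity α Y ≤ 1 - μ ^ (α + 1) := by
  classical
  set g := Nat.findGreatest (· ∈ Y)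
  have hg := hY.tendsto_findGreatest_atTop
  have hbound : ∀ᶠ m in atTop,
      alphaRatio α Y m ≤ (1 + 1 / (g m : ℝ)) ^ (α + 1) - μ ^ (α + 1) := by
    filter_upwards [hg.eventually (hY.eventually_imp_of_eventually_enumOf
        (P := fun y => ((Y ∩ Set.Icc 1 y).ncard : ℝ) ≤ (1 - μ) * y) h),
      hg.eventually (eventually_ge_atTop 1), eventually_findGreatest_mem hY.nonempty]
      with m hsmall hpos hmem
    calc alphaRatio α Y m ≤ alphaRatio α Y (g m) :=
          alphaRatio_le_alphaRatio_of_forall_notMem hpos (Nat.findGreatest_le m)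
            fun i hi him => Nat.findGreatest_is_greatest hi him
      _ ≤ _ := alphaRatio_le_of_ncard_le hα hpos hμ (hsmall hmem)
  have hlim : Tendsto (fun m => (1 + 1 / (g m : ℝ)) ^ (α + 1) - μ ^ (α + 1)) atTop
      (𝓝 (1 - μ ^ (α + 1))) :=
    ((tendsto_one_add_one_div_rpow_atTop (α + 1)).comp hg).sub_const _
  calc upperAlphaDensity α Y = limsup (alphaRatio α Y) atTop := upperAlphaDensity_eq_limsup α Y
    _ ≤ limsup (fun m => (1 + 1 / (g m : ℝ)) ^ (α + 1) - μ ^ (α + 1)) atTop :=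
        limsup_le_limsup hbound (isCoboundedUnder_alphaRatio α Y) hlim.isBoundedUnder_le
    _ = 1 - μ ^ (α + 1) := hlim.limsup_eq

/-- If `α > 0` and `Y` is infinite with `d⋆_α(Y) > 0`, then
`λ := 1 - (1 - d⋆_α(Y)/2)^{1/(α+1)} > 0` and there is an infinite `S` with
`|Y ∩ [1, y_n]| ≥ λ y_n` for all `n ∈ S`. -/
theorem stmt4 (α : ℝ) (hα : 0 < α) (Y : Set ℕ) (hY : Y.Infinite)
    (h : 0 < upperAlphaDensity α Y) :
    0 < 1 - (1 - upperAlphaDensity α Y / 2) ^ ((1 : ℝ) / (α + 1)) ∧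
    ∃ S : Set ℕ, S.Infinite ∧ ∀ n ∈ S,
      (1 - (1 - upperAlphaDensity α Y / 2) ^ ((1 : ℝ) / (α + 1))) * (enumOf Y n : ℝ) ≤
        ((Y ∩ Set.Icc 1 (enumOf Y n)).ncard : ℝ) := by
  set d := upperAlphaDensity α Y
  set μ := (1 - d / 2) ^ ((1 : ℝ) / (α + 1))
  have hd : 0 ≤ 1 - d / 2 := by linarith [upperAlphaDensity_le_one α Y]
  have hμ : μ ^ (α + 1) = 1 - d / 2 := by
    rw [← Real.rpow_mul hd, one_div_mul_cancel (by linarith), Real.rpow_one]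
  refine ⟨sub_pos.2 (Real.rpow_lt_one hd (by linarith) (by positivity)),
    {n | (1 - μ) * (enumOf Y n : ℝ) ≤ ((Y ∩ Set.Icc 1 (enumOf Y n)).ncard : ℝ)},
    fun hfin => ?_, fun n hn => hn⟩
  have hsmall : ∀ᶠ n in atTop,
      ((Y ∩ Set.Icc 1 (enumOf Y n)).ncard : ℝ) ≤ (1 - μ) * enumOf Y n := by
    rw [← Nat.cofinite_eq_atTop]
    exact hfin.eventually_cofinite_notMem.mono fun n hn => (not_le.1 hn).le
  have := upperAlphaDensity_le_of_eventually_ncard_le hα.le hY (Real.rpow_nonneg hd _) hsmall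
  linarith
end

section
/- Let I be a weakly thinnable ideal on ℕ, let x = (x_n) be a sequence in a topological space X, and let ω ∈ (0,1] be a normal number, i.e., (1/n) Σ_{i=1}^n d_i(ω) → 1/2. Then every I-cluster point of the subsequence x↾ω is an I-cluster point of x, i.e., Γ_{x↾ω}(I) ⊆ Γ_x(I). -/
open Filter Topology MeasureTheory Set

/-- The digit `d_{i+1}(ω)` of the non-terminating dyadic expansion of `ω ∈ (0,1]`
(digits are indexed from `0` to match `0`-indexed sequences). -/
noncomputable def dyadicDigit (ω : ℝ) (i : ℕ) : ℤ :=
  ⌈(2 : ℝ) ^ (i + 1) * ω⌉ - 2 * ⌈(2 : ℝ) ^ i * ω⌉ + 1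

/-- The set of indices kept when passing to the subsequence `x ↾ ω`. -/
def keepSet (ω : ℝ) : Set ℕ := {i | dyadicDigit ω i = 1}

/-- The subsequence `x ↾ ω` of `x`, keeping `x_i` exactly when `d_i(ω) = 1`. -/
noncomputable def subseq {X : Type*} (x : ℕ → X) (ω : ℝ) : ℕ → X :=
  fun n => x (enumOf (keepSet ω) n)

/-- `ω` is a normal number: `(1/n) ∑_{i=1}^n d_i(ω) → 1/2`. -/
def IsNormal (ω : ℝ) : Prop :=
  Tendsto (fun n : ℕ => (∑ i ∈ Finset.range n, (dyadicDigit ω i : ℝ)) / n) atTop (𝓝 (1 / 2))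

/-- `Γ_x(I)`: the set of `I`-cluster points of the sequence `x`. -/
def clusterPts {X : Type*} [TopologicalSpace X] (I : Set (Set ℕ)) (x : ℕ → X) : Set X :=
  {l | ∀ U ∈ 𝓝 l, {n | x n ∈ U} ∉ I}

lemma digit_cases (ω : ℝ) (i : ℕ) : dyadicDigit ω i = 0 ∨ dyadicDigit ω i = 1 := by
  unfold dyadicDigit
  set x := (2:ℝ)^i * ω with hx
  have h2x : (2:ℝ)^(i+1) * ω = 2 * x := by rw [hx]; ring
  rw [h2x]
  have h1 : ⌈(2:ℝ)*x⌉ ≤ 2 * ⌈x⌉ := by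
    apply Int.ceil_le.mpr
    push_cast
    linarith [Int.le_ceil x]
  have h2 : 2*⌈x⌉ - 1 ≤ ⌈(2:ℝ)*x⌉ := by
    have hc := Int.ceil_lt_add_one x
    have h2x' : (2:ℝ)*x ≤ ⌈(2:ℝ)*x⌉ := Int.le_ceil _
    have : ((2*⌈x⌉ - 2 : ℤ) : ℝ) < (⌈(2:ℝ)*x⌉ : ℝ) := by push_cast; linarith
    have : (2*⌈x⌉ - 2 : ℤ) < ⌈(2:ℝ)*x⌉ := by exact_mod_cast this
    omega
  omega

lemma sum_digits_eq (ω : ℝ) (n : ℕ) :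
    ∑ i ∈ Finset.range n, (dyadicDigit ω i : ℝ) =
      ((Finset.range n).filter (fun i => dyadicDigit ω i = 1)).card := by
  rw [Finset.card_filter]
  push_cast
  apply Finset.sum_congr rfl
  intro i _
  rcases digit_cases ω i with h | h <;> simp [h]

lemma keepSet_density (ω : ℝ) (hnorm : IsNormal ω) : HasDensity (keepSet ω) (1/2) := by
  classical
  set e : ℝ := if dyadicDigit ω 0 = 1 then 1 else 0 with he
  set S : ℕ → ℝ := fun n => ∑ i ∈ Finset.range n, (dyadicDigit ω i : ℝ) with hS
  have key : ∀ n : ℕ, ((keepSet ω ∩ Set.Icc 1 n).ncard : ℝ) = S (n+1) - e := by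
    intro n
    have hset : keepSet ω ∩ Set.Icc 1 n =
        ↑((Finset.Icc 1 n).filter (fun i => dyadicDigit ω i = 1)) := by
      ext i
      simp [keepSet, Finset.mem_filter, Set.mem_Icc, and_comm]
    rw [hset, Set.ncard_coe_finset]
    have hr : Finset.range (n+1) = insert 0 (Finset.Icc 1 n) := by
      ext i
      simp only [Finset.mem_range, Finset.mem_insert, Finset.mem_Icc]
      omega
    have hsum : S (n+1) =
        ((Finset.range (n+1)).filter (fun i => dyadicDigit ω i = 1)).card :=
      sum_digits_eq ω (n+1)
    rw [hsum, hr, Finset.filter_insert]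
    by_cases h0 : dyadicDigit ω 0 = 1
    · rw [if_pos h0, Finset.card_insert_of_notMem (by simp)]
      simp [he, h0]
    · rw [if_neg h0]
      simp [he, h0]
  have h1 : Tendsto (fun n : ℕ => S (n+1) / ((n:ℝ)+1)) atTop (𝓝 (1/2)) := by
    have := hnorm.comp (tendsto_add_atTop_nat 1)
    refine Tendsto.congr ?_ this
    intro n
    simp [hS, Function.comp]
  have h2 : Tendsto (fun n : ℕ => ((n:ℝ)+1)/n) atTop (𝓝 1) := by
    have h0 : Tendsto (fun n : ℕ => 1 + 1/(n:ℝ)) atTop (𝓝 (1 + 0)) :=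
      tendsto_const_nhds.add tendsto_one_div_atTop_nhds_zero_nat
    rw [add_zero] at h0
    apply h0.congr'
    filter_upwards [eventually_ge_atTop 1] with n hn
    have : (n:ℝ) ≠ 0 := by positivity
    field_simp
  have h3 : Tendsto (fun n : ℕ => e/(n:ℝ)) atTop (𝓝 0) :=
    Tendsto.div_atTop tendsto_const_nhds tendsto_natCast_atTop_atTop
  have hmain : Tendsto (fun n : ℕ => S (n+1)/((n:ℝ)+1) * (((n:ℝ)+1)/n) - e/n)
      atTop (𝓝 (1/2)) := by
    have := (h1.mul h2).sub h3
    simpa using this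
  unfold HasDensity
  apply hmain.congr'
  filter_upwards [eventually_ge_atTop 1] with n hn
  have hn0 : (n:ℝ) ≠ 0 := by positivity
  rw [key n]
  field_simp

/-- If `I` is a weakly thinnable ideal and `ω ∈ (0,1]` is a normal number, then every
`I`-cluster point of `x ↾ ω` is an `I`-cluster point of `x`. -/
theorem stmt7 {X : Type*} [TopologicalSpace X]
    (I : Set (Set ℕ)) (hI : IsIdeal I) (hwt : WeaklyThinnable I)
    (x : ℕ → X) (ω : ℝ) (hω : ω ∈ Set.Ioc (0 : ℝ) 1) (hnorm : IsNormal ω) :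
    clusterPts I (subseq x ω) ⊆ clusterPts I x := by
  intro l hl U hU
  have hB : {n | subseq x ω n ∈ U} ∉ I := hl U hU
  have hne : idxSet (keepSet ω) {n | subseq x ω n ∈ U} ∉ I :=
    hwt (keepSet ω) _ ⟨1/2, by norm_num, keepSet_density ω hnorm⟩ hB
  intro hcontra
  apply hne
  refine hI.2.1 _ _ ?_ hcontra
  rintro m ⟨b, hb, rfl⟩
  exact hb
end

section
/- Let I be an invariant ideal on ℕ, let x = (x_n) be a sequence in a topological space X, and let ω ∈ (0,1] be such that both ω and 1−ω have non-terminating dyadic expansions (so the index sets of the subsequences x↾ω and x↾(1−ω) partition ℕ). If x↾ω →_I ℓ and x↾(1−ω) →_I ℓ, and the index set of x↾ω has asymptotic density 1/2, then x →_I ℓ. -/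
open Filter Topology MeasureTheory Set

/-- `x →_I l`: the sequence `x` `I`-converges to `l`. -/
def IdealConv {X : Type*} [TopologicalSpace X] (I : Set (Set ℕ)) (x : ℕ → X) (l : X) : Prop :=
  ∀ U ∈ 𝓝 l, {n | x n ∉ U} ∈ I

/-- `I` is invariant: for each `A` with positive asymptotic density,
`A_B ∉ I` if and only if `B ∉ I`. -/
def Invariant (I : Set (Set ℕ)) : Prop :=
  ∀ A B : Set ℕ, (∃ c : ℝ, 0 < c ∧ HasDensity A c) → (idxSet A B ∉ I ↔ B ∉ I)


open Classical in
lemma stmt14_mem_ideal {X : Type*} [TopologicalSpace X]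
    (I : Set (Set ℕ)) (hI : IsIdeal I) (hinv : Invariant I)
    (x : ℕ → X) (U : Set X) (A : Set ℕ) (hA : ∃ c : ℝ, 0 < c ∧ HasDensity A c)
    (h : {n | x (enumOf A n) ∉ U} ∈ I) : {n | x n ∉ U} ∩ A ∈ I := by
  set T : Set ℕ := {n | x (enumOf A n) ∉ U}
  have hiT : idxSet A T ∈ I := by
    by_contra hc
    exact ((hinv A T hA).mp hc) h
  refine hI.2.1 _ _ ?_ hiT
  intro n hn
  refine ⟨Nat.count (· ∈ A) n, ?_, Nat.nth_count hn.2⟩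
  show x (enumOf A (Nat.count (· ∈ A) n)) ∉ U
  rw [show enumOf A (Nat.count (· ∈ A) n) = n from Nat.nth_count hn.2]
  exact hn.1

lemma hasDensity_compl {A : Set ℕ} {c : ℝ} (h : HasDensity A c) :
    HasDensity Aᶜ (1 - c) := by
  have key : ∀ n : ℕ, 1 ≤ n →
      ((Aᶜ ∩ Set.Icc 1 n).ncard : ℝ) / n = 1 - ((A ∩ Set.Icc 1 n).ncard : ℝ) / n := by
    intro n hn
    have hfin : (Set.Icc 1 n).Finite := Set.finite_Icc _ _
    have hdisj : Disjoint (A ∩ Set.Icc 1 n) (Aᶜ ∩ Set.Icc 1 n) :=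
      disjoint_compl_right.mono Set.inter_subset_left Set.inter_subset_left
    have hunion : (A ∩ Set.Icc 1 n) ∪ (Aᶜ ∩ Set.Icc 1 n) = Set.Icc 1 n := by
      rw [← Set.union_inter_distrib_right, Set.union_compl_self, Set.univ_inter]
    have hsum := Set.ncard_union_eq hdisj (hfin.subset Set.inter_subset_right)
      (hfin.subset Set.inter_subset_right)
    rw [hunion] at hsum
    have hicc : (Set.Icc 1 n).ncard = n := by
      rw [← Finset.coe_Icc, Set.ncard_coe_finset, Nat.card_Icc]; omega
    have hnpos : (0 : ℝ) < n := by exact_mod_cast hn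
    field_simp
    rw [hicc] at hsum
    have : ((A ∩ Set.Icc 1 n).ncard : ℝ) + ((Aᶜ ∩ Set.Icc 1 n).ncard : ℝ) = n := by
      exact_mod_cast hsum.symm
    linarith
  have h2 : Tendsto (fun n : ℕ => 1 - ((A ∩ Set.Icc 1 n).ncard : ℝ) / n) atTop (𝓝 (1 - c)) :=
    Filter.Tendsto.const_sub 1 h
  refine h2.congr' ?_
  filter_upwards [Filter.eventually_ge_atTop 1] with n hn
  exact (key n hn).symm

/-- If `I` is an invariant ideal, the index sets of `x ↾ ω` and `x ↾ (1-ω)` partition ℕ,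
the index set of `x ↾ ω` has asymptotic density `1/2`, and both subsequences `I`-converge
to `l`, then `x →_I l`. -/
theorem stmt14 {X : Type*} [TopologicalSpace X]
    (I : Set (Set ℕ)) (hI : IsIdeal I) (hinv : Invariant I)
    (x : ℕ → X) (l : X) (ω : ℝ) (hω : ω ∈ Set.Ioc (0 : ℝ) 1)
    (hpart : keepSet (1 - ω) = (keepSet ω)ᶜ)
    (hdens : HasDensity (keepSet ω) (1 / 2))
    (h1 : IdealConv I (subseq x ω) l) (h2 : IdealConv I (subseq x (1 - ω)) l) :
    IdealConv I x l := by
  intro U hU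
  have hAdens : ∃ c : ℝ, 0 < c ∧ HasDensity (keepSet ω) c :=
    ⟨1/2, by norm_num, hdens⟩
  have hBdens : ∃ c : ℝ, 0 < c ∧ HasDensity (keepSet (1 - ω)) c := by
    refine ⟨1/2, by norm_num, ?_⟩
    rw [hpart]
    have := hasDensity_compl hdens
    norm_num at this ⊢
    exact this
  have hA := stmt14_mem_ideal I hI hinv x U (keepSet ω) hAdens (h1 U hU)
  have hB := stmt14_mem_ideal I hI hinv x U (keepSet (1 - ω)) hBdens (h2 U hU)
  have := hI.1 _ _ hA hB
  refine hI.2.1 _ _ ?_ this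
  intro n hn
  by_cases hc : n ∈ keepSet ω
  · exact Or.inl ⟨hn, hc⟩
  · exact Or.inr ⟨hn, by rw [hpart]; exact hc⟩
end

section
/- The family I_f := {S ⊆ ℕ : S ∩ 2ℕ is finite} is an ideal on ℕ which is not weakly thinnable: the set A := ℕ \ {1} has asymptotic density 1, the set B := 2ℕ of even numbers satisfies B ∉ I_f, and yet A_B = 2ℕ + 1 (the odd numbers greater than 1) belongs to I_f. -/
open Filter Topology MeasureTheory Set

/-!
Removing the single point `1` from `ℕ` shifts the enumeration by one from index `1` on, so the
positive even indices are sent exactly to the odd numbers greater than `1`. The trace of these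
on `2ℕ` is empty, while `2ℕ` itself is infinite and `ℕ \ {1}` is cofinite, hence of density `1`.
-/

theorem isIdeal_setOf_inter_finite {E : Set ℕ} (hE : E.Infinite) :
    IsIdeal {S : Set ℕ | (S ∩ E).Finite} := by
  refine ⟨fun A B hA hB => ?_, fun A B hAB hB => hB.subset (inter_subset_inter_left _ hAB),
    fun A hA => hA.subset inter_subset_left, fun h => hE ?_⟩
  · simpa only [mem_ofPred_eq, union_inter_distrib_right] using hA.union hB
  · simpa using h

theorem ncard_inter_Icc_bounds {A : Set ℕ} (hA : Aᶜ.Finite) (n : ℕ) :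
    n ≤ (A ∩ Icc 1 n).ncard + Aᶜ.ncard ∧ (A ∩ Icc 1 n).ncard ≤ n := by
  have hIcc : (Icc 1 n).ncard = n := by simp
  constructor
  · calc n = (Icc 1 n).ncard := hIcc.symm
      _ ≤ (A ∩ Icc 1 n ∪ Aᶜ).ncard :=
          ncard_le_ncard (fun m hm => (em (m ∈ A)).elim (fun h => .inl ⟨h, hm⟩) .inr)
            (((finite_Icc 1 n).subset inter_subset_right).union hA)
      _ ≤ (A ∩ Icc 1 n).ncard + Aᶜ.ncard := ncard_union_le _ _
  · exact (ncard_le_ncard inter_subset_right (finite_Icc 1 n)).trans hIcc.le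

theorem hasDensity_one_of_finite_compl {A : Set ℕ} (hA : Aᶜ.Finite) : HasDensity A 1 := by
  have hlower : Tendsto (fun n : ℕ => 1 - (Aᶜ.ncard : ℝ) / n) atTop (𝓝 1) := by
    simpa using tendsto_const_nhds.sub (tendsto_const_div_atTop_nhds_zero_nat (Aᶜ.ncard : ℝ))
  refine tendsto_of_tendsto_of_tendsto_of_le_of_le' hlower tendsto_const_nhds ?_ ?_
  · filter_upwards [eventually_gt_atTop 0] with n hn
    have hn' : (0 : ℝ) < n := by exact_mod_cast hn
    rw [one_sub_div hn'.ne', div_le_div_iff_of_pos_right hn', sub_le_iff_le_add]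
    exact_mod_cast (ncard_inter_Icc_bounds hA n).1
  · filter_upwards with n
    exact div_le_one_of_le₀ (by exact_mod_cast (ncard_inter_Icc_bounds hA n).2) n.cast_nonneg

theorem Nat.count_ne_of_lt {k n : ℕ} (h : k < n) : Nat.count (· ≠ k) n = n - 1 := by
  rw [Nat.count_eq_card_filter_range, Finset.filter_ne',
    Finset.card_erase_of_mem (Finset.mem_range.2 h), Finset.card_range]

theorem Nat.nth_ne_of_le {k m : ℕ} (h : k ≤ m) : Nat.nth (· ≠ k) m = m + 1 := by
  have := Nat.nth_count (p := (· ≠ k)) (n := m + 1) (by omega)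
  rwa [Nat.count_ne_of_lt (by omega), Nat.add_sub_cancel] at this

theorem idxSet_setOf_ne {k : ℕ} {B : Set ℕ} (hB : ∀ b ∈ B, k ≤ b) :
    idxSet {n | n ≠ k} B = (· + 1) '' B :=
  image_congr fun b hb => Nat.nth_ne_of_le (hB b hb)

theorem image_succ_posEvens : (· + 1) '' {n : ℕ | 0 < n ∧ 2 ∣ n} = {n : ℕ | 1 < n ∧ ¬ 2 ∣ n} := by
  ext n
  simp only [mem_image, mem_ofPred_eq]
  constructor
  · rintro ⟨b, hb, rfl⟩
    omega
  · intro hn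
    exact ⟨n - 1, by omega, by omega⟩

theorem posEvens_infinite : {n : ℕ | 0 < n ∧ 2 ∣ n}.Infinite :=
  infinite_of_injective_forall_mem (f := fun k : ℕ => 2 * (k + 1))
    (fun a b h => by simp only at h; omega) (fun k => ⟨by omega, ⟨k + 1, rfl⟩⟩)

/-- The family `I_f = {S : S ∩ 2ℕ finite}` is an ideal which is not weakly thinnable:
`A = ℕ \ {1}` has asymptotic density `1`, `B = 2ℕ ∉ I_f`, yet `A_B` is the set of odd
numbers greater than `1`, which belongs to `I_f`. -/
theorem stmt15 :
    IsIdeal {S : Set ℕ | (S ∩ {n : ℕ | 0 < n ∧ 2 ∣ n}).Finite} ∧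
    ¬ WeaklyThinnable {S : Set ℕ | (S ∩ {n : ℕ | 0 < n ∧ 2 ∣ n}).Finite} ∧
    HasDensity {n : ℕ | n ≠ 1} 1 ∧
    {n : ℕ | 0 < n ∧ 2 ∣ n} ∉ {S : Set ℕ | (S ∩ {n : ℕ | 0 < n ∧ 2 ∣ n}).Finite} ∧
    idxSet {n : ℕ | n ≠ 1} {n : ℕ | 0 < n ∧ 2 ∣ n} = {n : ℕ | 1 < n ∧ ¬ 2 ∣ n} ∧
    idxSet {n : ℕ | n ≠ 1} {n : ℕ | 0 < n ∧ 2 ∣ n} ∈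
      {S : Set ℕ | (S ∩ {n : ℕ | 0 < n ∧ 2 ∣ n}).Finite} := by
  have hdens : HasDensity {n : ℕ | n ≠ 1} 1 :=
    hasDensity_one_of_finite_compl (by simp [compl_ofPred])
  have hB : {n : ℕ | 0 < n ∧ 2 ∣ n} ∉ {S : Set ℕ | (S ∩ {n : ℕ | 0 < n ∧ 2 ∣ n}).Finite} :=
    fun h => posEvens_infinite (by simpa only [mem_ofPred_eq, inter_self] using h)
  have hidx : idxSet {n : ℕ | n ≠ 1} {n : ℕ | 0 < n ∧ 2 ∣ n} = {n : ℕ | 1 < n ∧ ¬ 2 ∣ n} := by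
    rw [idxSet_setOf_ne fun b hb => hb.1, image_succ_posEvens]
  have hmem : idxSet {n : ℕ | n ≠ 1} {n : ℕ | 0 < n ∧ 2 ∣ n} ∈
      {S : Set ℕ | (S ∩ {n : ℕ | 0 < n ∧ 2 ∣ n}).Finite} := by
    rw [hidx, mem_ofPred_eq, (disjoint_left.2 fun n hn hn' => hn.2 hn'.2).inter_eq]
    exact finite_empty
  exact ⟨isIdeal_setOf_inter_finite posEvens_infinite,
    fun h => h _ _ ⟨1, one_ne_zero, hdens⟩ hB hmem, hdens, hB, hidx, hmem⟩
end
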